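/- arXiv:1806.09953 — 5 statements merged into one kernel-verified Lean document; each statement's English description precedes it below -/
import Mathlib

section
/- Let k ≥ 7 be odd and let G be a graph on n vertices containing no odd cycle of length less than k. Then the sum of the weights w(D) over all good sequences D in G is at most 1. -/
/-- `f` realizes a cycle of length `ℓ` in `G`: an injective map from `ZMod ℓ` whose
consecutive images are adjacent. -/
def IsCycleMap {V : Type*} (G : SimpleGraph V) {ℓ : ℕ} (f : ZMod ℓ → V) : Prop :=
  Function.Injective f ∧ ∀ i, G.Adj (f i) (f (i + 1))

/-- `G` contains no odd cycle of length less than `k`. -/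
def NoShortOddCycle {V : Type*} (G : SimpleGraph V) (k : ℕ) : Prop :=
  ∀ ℓ : ℕ, Odd ℓ → 3 ≤ ℓ → ℓ < k → ∀ f : ZMod ℓ → V, ¬ IsCycleMap G f

/-- The good sequence associated to the cycle `f = (v_0, v_1, …, v_{k-1})`:
the entries `v_2` and `v_3` are swapped. -/
def goodOfCycle {V : Type*} {k : ℕ} (f : ZMod k → V) : ZMod k → V :=
  fun i => if i = 2 then f 3 else if i = 3 then f 2 else f i

/-- `z` is a good sequence in `G`: it arises from some `k`-cycle of `G`
(quantifying over all cycle maps accounts for all `2k` rotations and reflections). -/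
def IsGoodSeq {V : Type*} (G : SimpleGraph V) {k : ℕ} (z : ZMod k → V) : Prop :=
  ∃ f : ZMod k → V, IsCycleMap G f ∧ z = goodOfCycle f

/-- The vertex sequence `z₀, z₁, z₃, z₂, z₄, …, z_{i-1}, w` (indices `0, …, i`,
with the final entry `w` at index `i`). -/
def seqAt {V : Type*} {k : ℕ} (z : ZMod k → V) (w : V) (i : ℕ) : ℕ → V :=
  fun a => if a = i then w else if a = 2 then z 3 else if a = 3 then z 2 else z (a : ZMod k)

/-- `q 0, q 1, …, q i` is an induced path in `G`. -/
def IsInducedPathOn {V : Type*} (G : SimpleGraph V) (q : ℕ → V) (i : ℕ) : Prop :=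
  (∀ a b, a ≤ i → b ≤ i → q a = q b → a = b) ∧
  (∀ a b, a ≤ i → b ≤ i → (G.Adj (q a) (q b) ↔ (b = a + 1 ∨ a = b + 1)))

/-- `q 0, q 1, …, q (k-1)` is an induced cycle in `G`. -/
def IsInducedCycleOn {V : Type*} (G : SimpleGraph V) (q : ℕ → V) (k : ℕ) : Prop :=
  (∀ a b, a < k → b < k → q a = q b → a = b) ∧
  (∀ a b, a < k → b < k →
    (G.Adj (q a) (q b) ↔
      ((b = a + 1 ∨ a = b + 1) ∨ (a = 0 ∧ b = k - 1) ∨ (b = 0 ∧ a = k - 1))))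

/-- The set `A_i(D)` for the good sequence `D = z` (of a graph `G` without odd cycles of
length less than `k`). -/
def Aset {V : Type*} (G : SimpleGraph V) (k : ℕ) (z : ZMod k → V) (i : ℕ) : Set V :=
  if i = 0 then Set.univ
  else if i = 1 then G.neighborSet (z 0)
  else if i = 2 then {w | w ∉ G.neighborSet (z 0) ∧ G.dist (z 1) w = 2}
  else if i = 3 then G.neighborSet (z 1) ∩ G.neighborSet (z 2)
  else if i = k - 1 then {w | IsInducedCycleOn G (seqAt z w (k - 1)) k}
  else {w | IsInducedPathOn G (seqAt z w i) i}

/-- The weight `w(D) = ∏_{i=0}^{k-1} |A_i(D)|⁻¹` of a good sequence `D = z`. -/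
noncomputable def weight {V : Type*} (G : SimpleGraph V) (k : ℕ) (z : ZMod k → V) : ℝ :=
  ∏ i ∈ Finset.range k, ((Nat.card ↥(Aset G k z i) : ℝ))⁻¹

/-- The good sequence `D_j = (v_j, v_{j+1}, v_{j+3}, v_{j+2}, v_{j+4}, …, v_{j+k-1})`
associated to the cycle `f = (v_0, …, v_{k-1})` (indices mod `k`). -/
def goodRot {V : Type*} {k : ℕ} (f : ZMod k → V) (j : ZMod k) : ZMod k → V :=
  goodOfCycle (fun i => f (j + i))

/-!
Choose `z₀, z₁, …, z_{k-1}` one after another, each `zᵢ` uniformly at random from a set `Aᵢ`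
that depends only on the entries chosen before it. A fixed sequence with `zᵢ ∈ Aᵢ` for all `i`
is produced with probability exactly `∏ |Aᵢ|⁻¹`, so these weights of distinct sequences sum to
at most `1`. Every good sequence has `zᵢ ∈ Aᵢ(D)`, because the `k`-cycles of `G` are induced and
the sequence `z₀ z₁ z₃ z₂ z₄ …` runs along its cycle.
-/

theorem ZMod.natCast_inj_of_lt {n a b : ℕ} (ha : a < n) (hb : b < n) :
    (a : ZMod n) = b ↔ a = b := by
  rw [ZMod.natCast_eq_natCast_iff', Nat.mod_eq_of_lt ha, Nat.mod_eq_of_lt hb]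

theorem ZMod.natCast_eq_natCast_add_one_iff {n a b : ℕ} (ha : a < n) (hb : b < n) :
    (b : ZMod n) = a + 1 ↔ b = a + 1 ∨ (a = n - 1 ∧ b = 0) := by
  rw [← Nat.cast_succ, ZMod.natCast_eq_natCast_iff', Nat.mod_eq_of_lt hb]
  rcases (Nat.succ_le_of_lt ha).lt_or_eq with hlt | heq
  · rw [Nat.mod_eq_of_lt hlt]; omega
  · rw [heq, Nat.mod_self]; omega

theorem SimpleGraph.dist_eq_two_of_adj_of_adj {V : Type*} {G : SimpleGraph V} {u v w : V}
    (hne : u ≠ v) (hnadj : ¬G.Adj u v) (hu : G.Adj u w) (hv : G.Adj w v) : G.dist u v = 2 := by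
  rw [SimpleGraph.dist, ENat.toNat_eq_iff two_ne_zero, Nat.cast_ofNat,
    SimpleGraph.edist_eq_two_iff]
  exact ⟨hne, hnadj, w, (SimpleGraph.mem_commonNeighbors G).mpr ⟨hu, hv.symm⟩⟩

theorem finsum_mem_le_of_forall_finset {α M : Type*} [AddCommMonoid M] [LE M] {s : Set α}
    {f : α → M} {c : M} (hc : 0 ≤ c) (h : ∀ t : Finset α, ↑t ⊆ s → ∑ x ∈ t, f x ≤ c) :
    ∑ᶠ x ∈ s, f x ≤ c := by
  by_cases hfin : (s ∩ Function.support f).Finite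
  · rw [finsum_mem_eq_sum f hfin]
    exact h _ fun x hx => ((Set.Finite.mem_toFinset hfin).mp hx).1
  · rw [finsum_mem_eq_zero_of_infinite hfin]
    exact hc

theorem inv_natCard_mul_card_le_one {α : Type*} {A : Set α} {T : Finset α} (hT : ↑T ⊆ A) :
    (Nat.card A : ℝ)⁻¹ * T.card ≤ 1 := by
  rcases A.finite_or_infinite with hfin | hinf
  · refine inv_mul_le_one_of_le₀ (Nat.cast_le.mpr ?_) (Nat.cast_nonneg _)
    rw [Nat.card_coe_set_eq, ← Set.ncard_coe_finset]
    exact Set.ncard_le_ncard hT hfin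
  · simp [hinf.to_subtype]

open Finset in
/-- No finiteness is assumed: `Nat.card` of an infinite set is `0`, which kills the term. -/
theorem sum_prod_inv_card_le_one {ι α : Type*} (n : ℕ) (x : ι → ℕ → α) (A : ι → ℕ → Set α)
    (S : Finset ι) (hinj : ∀ s ∈ S, ∀ t ∈ S, (∀ j < n, x s j = x t j) → s = t)
    (hdep : ∀ s ∈ S, ∀ t ∈ S, ∀ i < n, (∀ j < i, x s j = x t j) → A s i = A t i)
    (hmem : ∀ s ∈ S, ∀ i < n, x s i ∈ A s i) :
    ∑ s ∈ S, ∏ i ∈ range n, (Nat.card (A s i) : ℝ)⁻¹ ≤ 1 := by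
  classical
  induction n generalizing x A S with
  | zero =>
    simpa using card_le_one.mpr fun s hs t ht =>
      hinj s hs t ht fun j hj => (j.not_lt_zero hj).elim
  | succ n ih =>
    rcases S.eq_empty_or_nonempty with rfl | ⟨s₀, hs₀⟩
    · simp
    have hA₀ : ∀ s ∈ S, A s 0 = A s₀ 0 := fun s hs =>
      hdep s hs s₀ hs₀ 0 n.succ_pos fun j hj => (j.not_lt_zero hj).elim
    set c := (Nat.card (A s₀ 0) : ℝ)⁻¹
    set rest := fun s => ∏ i ∈ range n, (Nat.card (A s (i + 1)) : ℝ)⁻¹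
    -- Within a group of sequences with the same first entry, the shifted sequences
    -- satisfy the hypotheses for `n`.
    have hfiber : ∀ a ∈ S.image (x · 0), ∑ s ∈ S with x s 0 = a, rest s ≤ 1 := by
      intro a _
      have hext : ∀ s ∈ S.filter (x · 0 = a), ∀ t ∈ S.filter (x · 0 = a), ∀ m,
          (∀ j < m, x s (j + 1) = x t (j + 1)) → ∀ j < m + 1, x s j = x t j := by
        intro s hs t ht m h j hj
        rcases j with _ | j
        · rw [(mem_filter.mp hs).2, (mem_filter.mp ht).2]
        · exact h j (by omega)
      refine ih (fun s j => x s (j + 1)) (fun s i => A s (i + 1)) _ ?_ ?_ ?_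
      · exact fun s hs t ht h => hinj s (mem_filter.mp hs).1 t (mem_filter.mp ht).1
          (hext s hs t ht n h)
      · exact fun s hs t ht i hi h => hdep s (mem_filter.mp hs).1 t (mem_filter.mp ht).1
          (i + 1) (by omega) (hext s hs t ht i h)
      · exact fun s hs i hi => hmem s (mem_filter.mp hs).1 (i + 1) (by omega)
    calc ∑ s ∈ S, ∏ i ∈ range (n + 1), (Nat.card (A s i) : ℝ)⁻¹
        = (∑ s ∈ S, rest s) * c := by
          rw [sum_mul]
          exact sum_congr rfl fun s hs => by rw [prod_range_succ', hA₀ s hs]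
      _ = c * ∑ a ∈ S.image (x · 0), ∑ s ∈ S with x s 0 = a, rest s := by
        rw [mul_comm, sum_fiberwise_of_maps_to fun s hs => mem_image_of_mem (x · 0) hs]
      _ ≤ c * #(S.image (x · 0)) := by
        gcongr
        simpa using sum_le_sum hfiber
      _ ≤ 1 := inv_natCard_mul_card_le_one fun a ha => by
        obtain ⟨s, hs, rfl⟩ := mem_image.mp ha
        exact hA₀ s hs ▸ hmem s hs 0 n.succ_pos

namespace IsCycleMap

variable {V : Type*} {G : SimpleGraph V} {k : ℕ} {f : ZMod k → V}

theorem apply_natCast_ne (hf : IsCycleMap G f) {a b : ℕ} (ha : a < k) (hb : b < k)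
    (hab : a ≠ b) : f a ≠ f b :=
  hf.1.ne ((ZMod.natCast_inj_of_lt ha hb).not.mpr hab)

variable [NeZero k]

theorem shortcut (hf : IsCycleMap G f) {a b : ZMod k} (h : G.Adj (f b) (f a)) :
    IsCycleMap G fun j : ZMod ((b - a).val + 1) => f (a + j.val) := by
  set e := (b - a).val
  have he : e < k := ZMod.val_lt _
  constructor
  · intro i j hij
    have hcast : ((i.val : ℕ) : ZMod k) = j.val := add_left_cancel (hf.1 hij)
    exact ZMod.val_injective _ ((ZMod.natCast_inj_of_lt (by have := i.val_lt; omega)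
      (by have := j.val_lt; omega)).mp hcast)
  · intro j
    have hsucc : (j + 1).val = (j.val + 1) % (e + 1) := by
      rw [ZMod.val_add, ZMod.val_one_eq_one_mod, Nat.add_mod j.val 1, Nat.mod_eq_of_lt j.val_lt]
    show G.Adj (f (a + j.val)) (f (a + (j + 1).val))
    rcases Nat.lt_succ_iff_lt_or_eq.mp j.val_lt with hj | hj
    · rw [hsucc, Nat.mod_eq_of_lt (by omega), Nat.cast_succ, ← add_assoc]
      exact hf.2 _
    · rw [hsucc, hj, Nat.mod_self, ZMod.natCast_zmod_val, Nat.cast_zero, add_zero,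
        add_sub_cancel]
      exact h

theorem even_of_adj (hG : NoShortOddCycle G k) (hf : IsCycleMap G f) {a b : ZMod k}
    (h : G.Adj (f b) (f a)) (h2 : 2 ≤ (b - a).val) (hlt : (b - a).val + 1 < k) :
    Even ((b - a).val + 1) := by
  by_contra hodd
  exact hG _ (Nat.not_even_iff_odd.mp hodd) (by omega) hlt _ (hf.shortcut h)

/-- A `k`-cycle is induced: a chord would cut it into two cycles of total length `k + 2`,
one of which is odd and shorter than `k`. -/
theorem adj_iff (hodd : Odd k) (hG : NoShortOddCycle G k) (hf : IsCycleMap G f)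
    (a b : ZMod k) : G.Adj (f a) (f b) ↔ b = a + 1 ∨ a = b + 1 := by
  refine ⟨fun h => ?_, ?_⟩
  · by_contra hne
    obtain ⟨hne₁, hne₂⟩ := not_or.mp hne
    have hab : a ≠ b := fun hab => h.ne (congrArg f hab)
    have hba : b - a ≠ 0 := sub_ne_zero.mpr hab.symm
    have hsum : (b - a).val + (a - b).val = k := by
      rw [← neg_sub b a, ZMod.neg_val, if_neg hba]
      have := (b - a).val_lt
      omega
    have two_le : ∀ c d : ZMod k, d - c ≠ 0 → d ≠ c + 1 → 2 ≤ (d - c).val := by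
      intro c d h0 h1
      have hv0 : (d - c).val ≠ 0 := fun hv => h0 ((ZMod.val_eq_zero _).mp hv)
      have hv1 : (d - c).val ≠ 1 := fun hv => h1 (by
        rw [← sub_eq_iff_eq_add', ← ZMod.natCast_zmod_val (d - c), hv, Nat.cast_one])
      omega
    have hab2 := two_le a b hba hne₁
    have hba2 := two_le b a (sub_ne_zero.mpr hab) hne₂
    obtain ⟨r, hr⟩ := hf.even_of_adj hG h.symm hab2 (by omega)
    obtain ⟨s, hs⟩ := hf.even_of_adj hG h hba2 (by omega)
    obtain ⟨t, ht⟩ := hodd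
    omega
  · rintro (rfl | rfl)
    · exact hf.2 a
    · exact (hf.2 b).symm

theorem adj_natCast_iff (hodd : Odd k) (hG : NoShortOddCycle G k) (hf : IsCycleMap G f)
    {a b : ℕ} (ha : a < k) (hb : b < k) :
    G.Adj (f a) (f b) ↔ b = a + 1 ∨ a = b + 1 ∨ (a = k - 1 ∧ b = 0) ∨ (b = k - 1 ∧ a = 0) := by
  rw [hf.adj_iff hodd hG, ZMod.natCast_eq_natCast_add_one_iff ha hb,
    ZMod.natCast_eq_natCast_add_one_iff hb ha]
  tauto

theorem isInducedPathOn (hodd : Odd k) (hG : NoShortOddCycle G k) (hf : IsCycleMap G f)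
    {i : ℕ} (hi : i + 1 < k) : IsInducedPathOn G (fun a => f a) i := by
  refine ⟨fun a b ha hb hab => ?_, fun a b ha hb => ?_⟩
  · exact (ZMod.natCast_inj_of_lt (by omega) (by omega)).mp (hf.1 hab)
  · rw [hf.adj_natCast_iff hodd hG (by omega) (by omega)]
    omega

theorem isInducedCycleOn (hodd : Odd k) (hG : NoShortOddCycle G k) (hf : IsCycleMap G f) :
    IsInducedCycleOn G (fun a => f a) k := by
  refine ⟨fun a b ha hb hab => ?_, fun a b ha hb => ?_⟩
  · exact (ZMod.natCast_inj_of_lt ha hb).mp (hf.1 hab)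
  · rw [hf.adj_natCast_iff hodd hG ha hb]
    omega

end IsCycleMap

section GoodSequences

variable {V : Type*} {G : SimpleGraph V} {k : ℕ}

theorem isInducedPathOn_congr {q q' : ℕ → V} {i : ℕ} (h : ∀ a ≤ i, q a = q' a) :
    IsInducedPathOn G q i ↔ IsInducedPathOn G q' i := by
  simp +contextual only [IsInducedPathOn, h]

theorem isInducedCycleOn_congr {q q' : ℕ → V} {m : ℕ} (h : ∀ a < m, q a = q' a) :
    IsInducedCycleOn G q m ↔ IsInducedCycleOn G q' m := by
  simp +contextual only [IsInducedCycleOn, h]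

theorem seqAt_congr {z z' : ZMod k → V} {w : V} {i a : ℕ} (hi : 4 ≤ i) (ha : a ≤ i)
    (h : ∀ j : ℕ, j < i → z j = z' j) : seqAt z w i a = seqAt z' w i a := by
  unfold seqAt
  split_ifs with hai h2 h3
  · rfl
  · simpa using h 3 (by omega)
  · simpa using h 2 (by omega)
  · exact h a (by omega)

theorem Aset_congr {z z' : ZMod k → V} {i : ℕ} (h : ∀ j : ℕ, j < i → z j = z' j) :
    Aset G k z i = Aset G k z' i := by
  unfold Aset
  split_ifs with h0 h1 h2 h3 hk
  · rfl
  · simpa using congrArg G.neighborSet (h 0 (by omega))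
  · rw [show z 0 = z' 0 by simpa using h 0 (by omega),
      show z 1 = z' 1 by simpa using h 1 (by omega)]
  · rw [show z 1 = z' 1 by simpa using h 1 (by omega),
      show z 2 = z' 2 by simpa using h 2 (by omega)]
  · subst hk
    ext w
    exact isInducedCycleOn_congr fun a ha => seqAt_congr (by omega) (by omega) h
  · ext w
    exact isInducedPathOn_congr fun a ha => seqAt_congr (by omega) ha h

theorem goodOfCycle_natCast (f : ZMod k → V) (hk : 4 ≤ k) {a : ℕ} (ha : a < k) :
    goodOfCycle f a = f ((if a = 2 then 3 else if a = 3 then 2 else a : ℕ)) := by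
  have h2 : (a : ZMod k) = 2 ↔ a = 2 := by
    simpa using ZMod.natCast_inj_of_lt ha (b := 2) (by omega)
  have h3 : (a : ZMod k) = 3 ↔ a = 3 := by
    simpa using ZMod.natCast_inj_of_lt ha (b := 3) (by omega)
  unfold goodOfCycle
  simp only [h2, h3]
  split_ifs <;> simp

theorem seqAt_goodOfCycle (f : ZMod k → V) (hk : 4 ≤ k) {w : V} {i a : ℕ} (ha : a < k)
    (hai : a ≠ i) : seqAt (goodOfCycle f) w i a = f a := by
  unfold seqAt
  rw [if_neg hai]
  split_ifs with ha2 ha3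
  · simpa [ha2] using goodOfCycle_natCast f hk (a := 3) (by omega)
  · simpa [ha3] using goodOfCycle_natCast f hk (a := 2) (by omega)
  · rw [goodOfCycle_natCast f hk ha, if_neg ha2, if_neg ha3]

theorem goodOfCycle_mem_Aset_of_four_le [NeZero k] (hodd : Odd k) (hG : NoShortOddCycle G k)
    {f : ZMod k → V} (hf : IsCycleMap G f) {i : ℕ} (h4 : 4 ≤ i) (hi : i < k) :
    goodOfCycle f i ∈ Aset G k (goodOfCycle f) i := by
  have hseq : ∀ a ≤ i, seqAt (goodOfCycle f) (goodOfCycle f i) i a = f a := by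
    intro a ha
    rcases ha.lt_or_eq with ha | rfl
    · exact seqAt_goodOfCycle f (by omega) (by omega) ha.ne
    · rw [seqAt, if_pos rfl, goodOfCycle_natCast f (by omega) hi, if_neg (by omega),
        if_neg (by omega)]
  rw [Aset, if_neg (by omega), if_neg (by omega), if_neg (by omega), if_neg (by omega)]
  split_ifs with hlast
  · rw [← hlast]
    exact (isInducedCycleOn_congr fun a ha => hseq a (by omega)).mpr
      (hf.isInducedCycleOn hodd hG)
  · exact (isInducedPathOn_congr hseq).mpr (hf.isInducedPathOn hodd hG (by omega))

theorem goodOfCycle_mem_Aset (hodd : Odd k) (hk : 7 ≤ k) (hG : NoShortOddCycle G k)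
    {f : ZMod k → V} (hf : IsCycleMap G f) {i : ℕ} (hi : i < k) :
    goodOfCycle f i ∈ Aset G k (goodOfCycle f) i := by
  have : NeZero k := ⟨by omega⟩
  have hk4 : 4 ≤ k := by omega
  have adj : ∀ a b : ℕ, a < k → b < k →
      (G.Adj (f a) (f b) ↔ b = a + 1 ∨ a = b + 1 ∨ (a = k - 1 ∧ b = 0) ∨ (b = k - 1 ∧ a = 0)) :=
    fun a b => hf.adj_natCast_iff hodd hG
  have z0 : goodOfCycle f 0 = f 0 := by simpa using goodOfCycle_natCast f hk4 (a := 0) (by omega)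
  have z1 : goodOfCycle f 1 = f 1 := by simpa using goodOfCycle_natCast f hk4 (a := 1) (by omega)
  have z2 : goodOfCycle f 2 = f 3 := by simpa using goodOfCycle_natCast f hk4 (a := 2) (by omega)
  have z3 : goodOfCycle f 3 = f 2 := by simpa using goodOfCycle_natCast f hk4 (a := 3) (by omega)
  have h12 : G.Adj (f 1) (f 2) := by simpa using (adj 1 2 (by omega) (by omega)).mpr (by omega)
  have h23 : G.Adj (f 2) (f 3) := by simpa using (adj 2 3 (by omega) (by omega)).mpr (by omega)
  rcases i with _ | _ | _ | _ | i
  · simp [Aset]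
  · simpa [Aset, z0, z1] using (adj 0 1 (by omega) (by omega)).mpr (by omega)
  · have h03 : ¬G.Adj (f 0) (f 3) := by
      simpa using (adj 0 3 (by omega) (by omega)).not.mpr (by omega)
    have h13 : ¬G.Adj (f 1) (f 3) := by
      simpa using (adj 1 3 (by omega) (by omega)).not.mpr (by omega)
    have hne : f 1 ≠ f 3 := by
      simpa using hf.apply_natCast_ne (a := 1) (b := 3) (by omega) (by omega) (by omega)
    simpa [Aset, z0, z1, z2, h03] using SimpleGraph.dist_eq_two_of_adj_of_adj hne h13 h12 h23
  · simpa [Aset, z1, z2, z3] using ⟨h12, h23.symm⟩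
  · exact goodOfCycle_mem_Aset_of_four_le hodd hG hf (by omega) hi

end GoodSequences

theorem sum_of_all_weights_le_one_general {V : Type*} (k : ℕ) (hodd : Odd k)
    (hk : 7 ≤ k) (G : SimpleGraph V) (hG : NoShortOddCycle G k) :
    ∑ᶠ z ∈ {z : ZMod k → V | IsGoodSeq G z}, weight G k z ≤ 1 := by
  have : NeZero k := ⟨by omega⟩
  refine finsum_mem_le_of_forall_finset zero_le_one fun S hS => ?_
  refine sum_prod_inv_card_le_one k (fun z j => z j) (Aset G k) S ?_ ?_ ?_
  · exact fun z _ z' _ h => funext fun j => by simpa using h j.val j.val_lt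
  · exact fun z _ z' _ i _ h => Aset_congr h
  · intro z hz i hi
    obtain ⟨f, hf, rfl⟩ := hS hz
    exact goodOfCycle_mem_Aset hodd hk hG hf hi

/-- The sum of the weights of all good sequences in `G` is at most `1`. -/
theorem sum_of_all_weights_le_one {V : Type*} [Fintype V] (k : ℕ) (hodd : Odd k)
    (hk : 7 ≤ k) (G : SimpleGraph V) (hG : NoShortOddCycle G k) :
    ∑ᶠ z ∈ {z : ZMod k → V | IsGoodSeq G z}, weight G k z ≤ 1 :=
  sum_of_all_weights_le_one_general k hodd hk G hG
end

section
/- Let k ≥ 7 be odd, let G be a graph on n vertices containing no odd cycle of length less than k, and fix a k-cycle v_0v_1…v_{k−1} in G with good sequences D_j = (v_j, v_{j+1}, v_{j+3}, v_{j+2}, v_{j+4}, …, v_{j+k−1}) (indices mod k) for 0 ≤ j ≤ k−1, and set n_{i,j} = |A_i(D_j)|. Then ∑_{j=0}^{k−1} ( n_{1,j}/2 + ∑_{i=2}^{k−1} n_{i,j} ) ≤ n(k−1). -/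
/-!
Double counting: the left-hand side equals `∑_u (a(u)/2 + c(u))`, where `a(u)` is the number of
cycle neighbours of `u` and `c(u)` the number of pairs `(i, j)` with `2 ≤ i ≤ k - 1` and
`u ∈ A_i(D_j)`, so it suffices to show `a(u)/2 + c(u) ≤ k - 1` for every vertex `u`.

A walk of length `M` from `v_a` to `v_b` is closed by one of the two arcs of the cycle into an odd
closed walk, which has length at least `k`; hence `v_b` is `d ≤ M` steps from `v_a` along the
cycle, with `d ≡ M (mod 2)`. For `M = 2` this leaves three cases for the cycle neighbours of `u`:
none, a single `v_m`, or exactly `v_{m-1}` and `v_{m+1}`. For `4 ≤ i ≤ k - 2`, `u ∈ A_i(D_j)`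
forces `u ~ v_{j+i-1}` and `u ≁ v_{j+i-3}`, which determines `j`. With `M = 3` the offset
argument pins down the few `j` with `u` in `A_2(D_j)`, `A_3(D_j)` or `A_{k-1}(D_j)`; with `M = 4`
it shows that a vertex without cycle neighbours lies outside some `A_2(D_j)`. The three cases give
`a(u)/2 + c(u)` at most `k - 1`, `k - 3/2` and `k - 1`.
-/

open Finset

namespace ZMod

variable {k : ℕ}

lemma natCast_ne_natCast_of_lt {a b : ℕ} (ha : a < k) (hb : b < k) (hab : a ≠ b) :
    (a : ZMod k) ≠ b := by
  rwa [Ne, natCast_eq_natCast_iff', Nat.mod_eq_of_lt ha, Nat.mod_eq_of_lt hb]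

lemma natCast_ne_zero_of_lt_two_mul {n : ℕ} (hn0 : 0 < n) (hn : n < 2 * k) (hnk : n ≠ k) :
    (n : ZMod k) ≠ 0 := by
  rw [Ne, natCast_eq_zero_iff]
  rintro ⟨c, rfl⟩
  obtain _ | _ | c := c
  · omega
  · omega
  · nlinarith

lemma natCast_ne_zero_of_odd (hk : Odd k) {n : ℕ} (hn0 : 0 < n) (hn : n < 2 * k) (he : Even n) :
    (n : ZMod k) ≠ 0 :=
  natCast_ne_zero_of_lt_two_mul hn0 hn (by rintro rfl; exact Nat.not_even_iff_odd.2 hk he)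

lemma two_ne_zero_of_odd (hk : Odd k) (hk3 : 3 ≤ k) : (2 : ZMod k) ≠ 0 := by
  exact_mod_cast natCast_ne_zero_of_odd hk (n := 2) (by norm_num) (by omega) (by decide)

lemma four_ne_zero_of_odd (hk : Odd k) (hk3 : 3 ≤ k) : (4 : ZMod k) ≠ 0 := by
  exact_mod_cast natCast_ne_zero_of_odd hk (n := 4) (by norm_num) (by omega) (by decide)

end ZMod

lemma sum_range_natCast_eq_sum_univ {M : Type*} [AddCommMonoid M] (k : ℕ) [NeZero k]
    (g : ZMod k → M) : ∑ j ∈ range k, g j = ∑ j, g j :=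
  sum_nbij' Nat.cast ZMod.val (by simp) (by simp [ZMod.val_lt])
    (fun _ ha => ZMod.val_cast_of_lt (mem_range.1 ha)) (fun x _ => ZMod.natCast_zmod_val x)
    (fun _ _ => rfl)

lemma sum_Icc_two_pred_eq {M : Type*} [AddCommMonoid M] {k : ℕ} (hk : 6 ≤ k) (g : ℕ → M) :
    ∑ i ∈ Icc 2 (k - 1), g i = g 2 + g 3 + g (k - 1) + ∑ i ∈ Icc 4 (k - 2), g i := by
  obtain ⟨n, rfl⟩ : ∃ n, k = n + 6 := ⟨k - 6, by omega⟩
  rw [show n + 6 - 1 = n + 4 + 1 by omega, sum_Icc_succ_top (by omega),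
    ← add_sum_Ioc_eq_sum_Icc (by omega), ← Icc_add_one_left_eq_Ioc,
    ← add_sum_Ioc_eq_sum_Icc (by omega), ← Icc_add_one_left_eq_Ioc,
    show n + 6 - 2 = n + 4 by omega, show 2 + 1 + 1 = 4 from rfl]
  abel_nf

lemma card_filter_le_card_of_forall_mem {α : Type*} [Fintype α] {p : α → Prop}
    [DecidablePred p] {s : Finset α} (h : ∀ a, p a → a ∈ s) : #{a | p a} ≤ #s :=
  card_le_card fun a ha => h a (mem_filter.1 ha).2

lemma card_filter_le_one_of_forall_eq {α : Type*} [Fintype α] {p : α → Prop} [DecidablePred p]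
    {c : α} (h : ∀ a, p a → a = c) : #{a | p a} ≤ 1 :=
  (card_filter_le_card_of_forall_mem fun a ha => mem_singleton.2 (h a ha)).trans
    (card_singleton c).le

open scoped Classical in
lemma sum_natCard_eq_sum_card_filter {ι V : Type*} [Fintype V] (s : Finset ι) (S : ι → Set V) :
    ∑ j ∈ s, Nat.card (S j) = ∑ u, #{j ∈ s | u ∈ S j} := by
  simp only [card_filter, Nat.card_eq_fintype_card, Fintype.card_subtype]
  exact sum_comm

section OddWalks

variable {V : Type*} {G : SimpleGraph V} {k : ℕ}

lemma isCycleMap_of_injOn {L : ℕ} [NeZero L] (hL : 1 < L) {p : ℕ → V}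
    (hp : ∀ a < L, G.Adj (p a) (p (a + 1))) (hcl : p L = p 0) (hinj : Set.InjOn p (Set.Iio L)) :
    IsCycleMap G (fun i : ZMod L => p i.val) := by
  have : Fact (1 < L) := ⟨hL⟩
  refine ⟨fun i j hij => ZMod.val_injective L (hinj (ZMod.val_lt i) (ZMod.val_lt j) hij),
    fun i => ?_⟩
  have hval : (i + 1).val = (i.val + 1) % L := by rw [ZMod.val_add, ZMod.val_one]
  show G.Adj (p i.val) (p (i + 1).val)
  obtain hi | hi : i.val + 1 < L ∨ i.val + 1 = L := by have := ZMod.val_lt i; omega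
  · rw [hval, Nat.mod_eq_of_lt hi]
    exact hp _ (ZMod.val_lt i)
  · have := hp _ (ZMod.val_lt i)
    rwa [hval, hi, Nat.mod_self, ← hcl, ← congrArg p hi]

theorem NoShortOddCycle.le_of_odd_closedWalk (hG : NoShortOddCycle G k) {L : ℕ} (hL : Odd L)
    {p : ℕ → V} (hp : ∀ a < L, G.Adj (p a) (p (a + 1))) (hcl : p L = p 0) : k ≤ L := by
  induction L using Nat.strong_induction_on generalizing p with
  | _ L ih =>
  by_contra! hLk
  obtain rfl | hL3 : L = 1 ∨ 3 ≤ L := by obtain ⟨c, rfl⟩ := hL; omega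
  · exact G.irrefl (hcl ▸ hp 0 one_pos)
  by_cases hinj : Set.InjOn p (Set.Iio L)
  · have : NeZero L := ⟨by omega⟩
    exact hG L hL hL3 hLk _ (isCycleMap_of_injOn (by omega) hp hcl hinj)
  obtain ⟨a, b, hab, hbL, heq⟩ : ∃ a b, a < b ∧ b < L ∧ p a = p b := by
    simp only [Set.InjOn, Set.mem_Iio, not_forall] at hinj
    obtain ⟨a, ha, b, hb, heq, hne⟩ := hinj
    rcases Nat.lt_or_gt_of_ne hne with h | h
    · exact ⟨a, b, h, hb, heq⟩
    · exact ⟨b, a, h, ha, heq.symm⟩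
  -- Cut out the closed subwalk from `a` to `b`: of it and the rest, one has odd length `< L`.
  rcases Nat.even_or_odd (b - a) with hev | hodd
  · have hodd : Odd (L - (b - a)) := by
      obtain ⟨c, hc⟩ := hL; obtain ⟨d, hd⟩ := hev; exact ⟨c - d, by omega⟩
    have := ih _ (by omega) hodd (p := fun c => if c ≤ a then p c else p (c + (b - a)))
      (fun c hc => by
        rcases Nat.lt_trichotomy c a with h | rfl | h
        · simpa [h.le, Nat.succ_le_of_lt h] using hp c (by omega)
        · simpa [(by omega : c + 1 + (b - c) = b + 1), heq] using hp b hbL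
        · rw [if_neg (by omega), if_neg (by omega),
            (by omega : c + 1 + (b - a) = c + (b - a) + 1)]
          exact hp (c + (b - a)) (by omega))
      (by rw [if_neg (by omega), if_pos (by omega), (by omega : L - (b - a) + (b - a) = L), hcl])
    omega
  · have := ih _ (by omega) hodd (p := fun c => p (a + c))
      (fun c hc => by simpa [add_assoc] using hp (a + c) (by omega))
      (by simp [(by omega : a + (b - a) = b), heq])
    omega

theorem NoShortOddCycle.le_add_of_walks (hG : NoShortOddCycle G k) {L M : ℕ} {p q : ℕ → V}
    (hp : ∀ a < L, G.Adj (p a) (p (a + 1))) (hq : ∀ a < M, G.Adj (q a) (q (a + 1)))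
    (hpq : p L = q 0) (hqp : q M = p 0) (hodd : Odd (L + M)) : k ≤ L + M := by
  refine hG.le_of_odd_closedWalk hodd (p := fun c => if c ≤ L then p c else q (c - L))
    (fun c hc => ?_) ?_
  · rcases Nat.lt_trichotomy c L with h | rfl | h
    · simpa [h.le, Nat.succ_le_of_lt h] using hp c h
    · simpa [hpq] using hq 0 (by omega)
    · rw [if_neg (by omega), if_neg (by omega), (by omega : c + 1 - L = c - L + 1)]
      exact hq (c - L) (by omega)
  · rcases Nat.eq_zero_or_pos M with rfl | hM
    · simp [hpq, hqp]
    · simp [hM.ne', hqp]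

lemma adj_reverse {M : ℕ} {q : ℕ → V} (hq : ∀ a < M, G.Adj (q a) (q (a + 1))) :
    ∀ a < M, G.Adj (q (M - a)) (q (M - (a + 1))) := fun a ha =>
  ((by omega : M - (a + 1) + 1 = M - a) ▸ hq (M - (a + 1)) (by omega)).symm

end OddWalks

section CycleOffsets

variable {V : Type*} {G : SimpleGraph V} {k : ℕ} {f : ZMod k → V}

theorem NoShortOddCycle.le_val_sub_add [NeZero k] (hG : NoShortOddCycle G k)
    (hf : ∀ i, G.Adj (f i) (f (i + 1))) {a b : ZMod k} {M : ℕ} {q : ℕ → V}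
    (hq : ∀ c < M, G.Adj (q c) (q (c + 1))) (hq0 : q 0 = f b) (hqM : q M = f a)
    (hodd : Odd ((b - a).val + M)) : k ≤ (b - a).val + M :=
  hG.le_add_of_walks (p := fun c => f (a + c))
    (fun c _ => by simpa [add_assoc] using hf (a + c)) hq
    (by simp [hq0]) (by simp [hqM]) hodd

theorem NoShortOddCycle.exists_offset_of_walk (hG : NoShortOddCycle G k) (hk : Odd k)
    (hf : ∀ i, G.Adj (f i) (f (i + 1))) {a b : ZMod k} {M : ℕ} {q : ℕ → V}
    (hq : ∀ c < M, G.Adj (q c) (q (c + 1))) (hq0 : q 0 = f a) (hqM : q M = f b) :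
    ∃ d ≤ M, Even (d + M) ∧ (b = a + d ∨ a = b + d) := by
  have : NeZero k := ⟨hk.pos.ne'⟩
  obtain ⟨K, hK⟩ := hk
  have ht := ZMod.val_lt (b - a)
  rcases Nat.even_or_odd ((b - a).val + M) with ⟨e, he⟩ | hodd
  · by_cases hab : b - a = 0
    · rw [hab, ZMod.val_zero] at he
      exact ⟨0, by omega, ⟨e, by omega⟩, Or.inl (by simpa [sub_eq_zero] using hab)⟩
    have hneg : (a - b).val = k - (b - a).val := by
      rw [← neg_sub, ZMod.neg_val, if_neg hab]
    have := hG.le_val_sub_add hf hq hq0 hqM ⟨K + e - (b - a).val, by omega⟩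
    rw [hneg] at this
    exact ⟨(b - a).val, by omega, ⟨e, he⟩, Or.inl (by simp)⟩
  · have := hG.le_val_sub_add hf (adj_reverse hq) (by simpa using hqM) (by simpa using hq0) hodd
    obtain ⟨e, he⟩ := hodd
    refine ⟨k - (b - a).val, by omega, ⟨K + 1 + e - (b - a).val, by omega⟩, Or.inr ?_⟩
    simp [Nat.cast_sub ht.le]

theorem NoShortOddCycle.eq_add_two_or_eq_add_two (hG : NoShortOddCycle G k) (hk : Odd k)
    (hf : ∀ i, G.Adj (f i) (f (i + 1))) {a b : ZMod k} {u : V}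
    (ha : G.Adj (f a) u) (hb : G.Adj u (f b)) (hab : a ≠ b) : b = a + 2 ∨ a = b + 2 := by
  obtain ⟨d, hd, ⟨e, he⟩, h⟩ := hG.exists_offset_of_walk hk hf (M := 2)
    (q := fun c => if c = 0 then f a else if c = 1 then u else f b)
    (fun c hc => by interval_cases c <;> simpa) rfl rfl
  obtain rfl | rfl : d = 0 ∨ d = 2 := by omega
  · simp only [Nat.cast_zero, add_zero] at h
    exact absurd (h.elim Eq.symm id) hab
  · simpa using h

theorem NoShortOddCycle.eq_add_one_or_eq_add_three (hG : NoShortOddCycle G k) (hk : Odd k)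
    (hf : ∀ i, G.Adj (f i) (f (i + 1))) {a b : ZMod k} {x u : V}
    (hax : G.Adj (f a) x) (hxu : G.Adj x u) (hub : G.Adj u (f b)) :
    b = a + 1 ∨ a = b + 1 ∨ b = a + 3 ∨ a = b + 3 := by
  obtain ⟨d, hd, ⟨e, he⟩, h⟩ := hG.exists_offset_of_walk hk hf (M := 3)
    (q := fun c => if c = 0 then f a else if c = 1 then x else if c = 2 then u else f b)
    (fun c hc => by interval_cases c <;> simpa) rfl rfl
  obtain rfl | rfl : d = 1 ∨ d = 3 := by omega
  all_goals push_cast at h; tauto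

theorem NoShortOddCycle.not_adj_adj_adj_adj_add_one (hG : NoShortOddCycle G k) (hk : Odd k)
    (hk7 : 7 ≤ k) (hf : ∀ i, G.Adj (f i) (f (i + 1))) {a : ZMod k} {x u y : V}
    (hax : G.Adj (f a) x) (hxu : G.Adj x u) (huy : G.Adj u y) (hy : G.Adj y (f (a + 1))) :
    False := by
  obtain ⟨d, hd, ⟨e, he⟩, h⟩ := hG.exists_offset_of_walk hk hf (M := 4)
    (q := fun c => if c = 0 then f a else if c = 1 then x else if c = 2 then u else
      if c = 3 then y else f (a + 1))
    (fun c hc => by interval_cases c <;> simpa) rfl rfl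
  rcases h with h | h
  · exact ZMod.natCast_ne_natCast_of_lt (k := k) (a := d) (b := 1) (by omega) (by omega)
      (by omega) (by simpa using (add_left_cancel h).symm)
  · exact ZMod.natCast_ne_zero_of_lt_two_mul (k := k) (n := d + 1) (by omega) (by omega)
      (by omega) (by push_cast; linear_combination -h)

end CycleOffsets

lemma exists_adj_adj_of_dist_eq_two {V : Type*} {G : SimpleGraph V} {a b : V}
    (h : G.dist a b = 2) : ∃ x, G.Adj a x ∧ G.Adj x b := by
  have he : G.edist a b = 2 := by
    rw [← (SimpleGraph.Reachable.of_dist_ne_zero (by omega)).coe_dist_eq_edist, h]; rfl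
  obtain ⟨-, -, x, hx⟩ := SimpleGraph.edist_eq_two_iff.1 he
  rw [SimpleGraph.mem_commonNeighbors] at hx
  exact ⟨x, hx.1, hx.2.symm⟩

section GoodRot

variable {V : Type*} {G : SimpleGraph V} {k : ℕ} {f : ZMod k → V} {j : ZMod k} {u : V}

lemma goodRot_natCast (hk : 4 ≤ k) {a : ℕ} (ha : a < k) (h2 : a ≠ 2) (h3 : a ≠ 3) :
    goodRot f j a = f (j + a) := by
  have h2' : (a : ZMod k) ≠ ((2 : ℕ) : ZMod k) :=
    ZMod.natCast_ne_natCast_of_lt ha (by omega) h2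
  have h3' : (a : ZMod k) ≠ ((3 : ℕ) : ZMod k) :=
    ZMod.natCast_ne_natCast_of_lt ha (by omega) h3
  simp only [Nat.cast_ofNat] at h2' h3'
  simp [goodRot, goodOfCycle, h2', h3']

lemma goodRot_zero (hk : 4 ≤ k) : goodRot f j 0 = f j := by
  simpa using goodRot_natCast (f := f) (j := j) hk (a := 0) (by omega) (by omega) (by omega)

lemma goodRot_one (hk : 4 ≤ k) : goodRot f j 1 = f (j + 1) := by
  simpa using goodRot_natCast (f := f) (j := j) hk (a := 1) (by omega) (by omega) (by omega)

lemma goodRot_two : goodRot f j 2 = f (j + 3) := by simp [goodRot, goodOfCycle]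

lemma goodRot_three (hk : 4 ≤ k) : goodRot f j 3 = f (j + 2) := by
  have : (3 : ZMod k) ≠ 2 := by
    simpa using ZMod.natCast_ne_natCast_of_lt (k := k) (a := 3) (b := 2) (by omega) (by omega)
      (by omega)
  simp [goodRot, goodOfCycle, this]

lemma seqAt_self {z : ZMod k → V} {i : ℕ} : seqAt z u i i = u := by simp [seqAt]

lemma seqAt_goodRot (hk : 4 ≤ k) {i a : ℕ} (ha : a < k) (hai : a ≠ i) :
    seqAt (goodRot f j) u i a = f (j + a) := by
  unfold seqAt
  rw [if_neg hai]
  split_ifs with h2 h3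
  · simp [h2, goodRot_three hk]
  · simp [h3, goodRot_two]
  · exact goodRot_natCast hk ha h2 h3

lemma mem_Aset_one (hk : 4 ≤ k) : u ∈ Aset G k (goodRot f j) 1 ↔ G.Adj (f j) u := by
  simp [Aset, goodRot_zero hk]

lemma adj_of_mem_Aset_two (hk : 4 ≤ k) (h : u ∈ Aset G k (goodRot f j) 2) :
    ¬ G.Adj (f j) u ∧ ∃ x, G.Adj (f (j + 1)) x ∧ G.Adj x u := by
  simp only [Aset, OfNat.ofNat_ne_zero, OfNat.ofNat_ne_one, if_false, if_true,
    goodRot_zero hk, goodRot_one hk, Set.mem_ofPred_eq, SimpleGraph.mem_neighborSet] at h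
  exact ⟨h.1, exists_adj_adj_of_dist_eq_two h.2⟩

lemma adj_of_mem_Aset_three (hk : 4 ≤ k) (h : u ∈ Aset G k (goodRot f j) 3) :
    G.Adj (f (j + 1)) u ∧ G.Adj (f (j + 3)) u := by
  simpa [Aset, goodRot_one hk, goodRot_two] using h

lemma adj_of_mem_Aset_of_le {i : ℕ} (hi : 4 ≤ i) (hik : i ≤ k - 2)
    (h : u ∈ Aset G k (goodRot f j) i) :
    G.Adj (f (j + (i - 1 : ℕ))) u ∧ ¬ G.Adj (f (j + (i - 3 : ℕ))) u := by
  simp only [Aset, if_neg (by omega : i ≠ 0), if_neg (by omega : i ≠ 1),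
    if_neg (by omega : i ≠ 2), if_neg (by omega : i ≠ 3), if_neg (by omega : i ≠ k - 1),
    Set.mem_ofPred_eq] at h
  have hadj := h.2 (i - 1) i (by omega) le_rfl
  have hnadj := h.2 (i - 3) i (by omega) le_rfl
  rw [seqAt_self, seqAt_goodRot (i := i) (by omega) (by omega) (by omega)] at hadj hnadj
  exact ⟨hadj.2 (by omega), fun h' => by have := hnadj.1 h'; omega⟩

lemma adj_of_mem_Aset_pred (hk : 5 ≤ k) (h : u ∈ Aset G k (goodRot f j) (k - 1)) :
    G.Adj (f j) u ∧ G.Adj (f (j - 2)) u := by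
  simp only [Aset, if_neg (by omega : k - 1 ≠ 0), if_neg (by omega : k - 1 ≠ 1),
    if_neg (by omega : k - 1 ≠ 2), if_neg (by omega : k - 1 ≠ 3), if_true,
    Set.mem_ofPred_eq] at h
  have h0 := (h.2 0 (k - 1) (by omega) (by omega)).2 (by simp)
  have h2 := (h.2 (k - 2) (k - 1) (by omega) (by omega)).2 (by omega)
  have hcast : ((k - 2 : ℕ) : ZMod k) = -2 := by simp [Nat.cast_sub (by omega : 2 ≤ k)]
  rw [seqAt_self, seqAt_goodRot (i := k - 1) (by omega) (by omega) (by omega)] at h0 h2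
  rw [hcast] at h2
  exact ⟨by simpa using h0, by simpa [sub_eq_add_neg] using h2⟩

end GoodRot

section CycleNeighbors

variable {V : Type*} {G : SimpleGraph V} {k : ℕ} {f : ZMod k → V} {u : V} {m j : ZMod k}

theorem NoShortOddCycle.adj_iff_of_adj_sub_one_of_adj_add_one (hG : NoShortOddCycle G k)
    (hk : Odd k) (hk5 : 5 ≤ k) (hf : ∀ i, G.Adj (f i) (f (i + 1)))
    (h₁ : G.Adj (f (m - 1)) u) (h₂ : G.Adj (f (m + 1)) u) (n : ZMod k) :
    G.Adj (f n) u ↔ n = m - 1 ∨ n = m + 1 := by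
  refine ⟨fun hn => ?_, by rintro (rfl | rfl) <;> assumption⟩
  by_contra! hne
  have h6 : ((6 : ℕ) : ZMod k) ≠ 0 :=
    ZMod.natCast_ne_zero_of_odd hk (by norm_num) (by omega) (by decide)
  rcases hG.eq_add_two_or_eq_add_two hk hf hn h₁.symm hne.1 with h | h <;>
  rcases hG.eq_add_two_or_eq_add_two hk hf hn h₂.symm hne.2 with h' | h'
  · exact hne.1 (by linear_combination -h')
  · exact h6 (by push_cast; linear_combination -h - h')
  all_goals exact hne.2 (by linear_combination h)

theorem NoShortOddCycle.cycle_neighbors_cases (hG : NoShortOddCycle G k) (hk : Odd k)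
    (hk5 : 5 ≤ k) (hf : ∀ i, G.Adj (f i) (f (i + 1))) (u : V) :
    (∀ n, ¬ G.Adj (f n) u) ∨ (∃ m, ∀ n, G.Adj (f n) u ↔ n = m) ∨
      ∃ m, ∀ n, G.Adj (f n) u ↔ n = m - 1 ∨ n = m + 1 := by
  by_cases h0 : ∃ a, G.Adj (f a) u
  swap
  · exact Or.inl (not_exists.1 h0)
  obtain ⟨a, ha⟩ := h0
  by_cases h1 : ∃ b, G.Adj (f b) u ∧ b ≠ a
  swap
  · push Not at h1
    exact Or.inr (Or.inl ⟨a, fun n => ⟨h1 n, by rintro rfl; exact ha⟩⟩)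
  obtain ⟨b, hb, hba⟩ := h1
  refine Or.inr (Or.inr ?_)
  rcases hG.eq_add_two_or_eq_add_two hk hf ha hb.symm hba.symm with rfl | rfl
  · exact ⟨a + 1, hG.adj_iff_of_adj_sub_one_of_adj_add_one hk hk5 hf (by simpa using ha)
      (by rwa [add_assoc, one_add_one_eq_two])⟩
  · exact ⟨b + 1, hG.adj_iff_of_adj_sub_one_of_adj_add_one hk hk5 hf (by simpa using hb)
      (by rwa [add_assoc, one_add_one_eq_two])⟩

theorem NoShortOddCycle.eq_of_mem_Aset_two_of_adj_iff_eq (hG : NoShortOddCycle G k) (hk : Odd k)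
    (hk4 : 4 ≤ k) (hf : ∀ i, G.Adj (f i) (f (i + 1))) (hm : ∀ n, G.Adj (f n) u ↔ n = m)
    (h : u ∈ Aset G k (goodRot f j) 2) : j = m - 2 ∨ j = m - 4 ∨ j = m + 2 := by
  obtain ⟨hj, x, hx, hxu⟩ := adj_of_mem_Aset_two hk4 h
  rcases hG.eq_add_one_or_eq_add_three hk hf hx hxu ((hm m).2 rfl).symm with h | h | h | h
  · exact Or.inl (by linear_combination -h)
  · exact absurd ((hm j).2 (add_right_cancel h)) hj
  · exact Or.inr (Or.inl (by linear_combination -h))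
  · exact Or.inr (Or.inr (by linear_combination h))

lemma notMem_Aset_three_of_adj_iff_eq (hk : Odd k) (hk4 : 4 ≤ k)
    (hm : ∀ n, G.Adj (f n) u ↔ n = m) : u ∉ Aset G k (goodRot f j) 3 := fun h => by
  obtain ⟨h₁, h₃⟩ := adj_of_mem_Aset_three hk4 h
  exact ZMod.two_ne_zero_of_odd hk (by omega)
    (by linear_combination (hm _).1 h₃ - (hm _).1 h₁)

lemma notMem_Aset_pred_of_adj_iff_eq (hk : Odd k) (hk5 : 5 ≤ k)
    (hm : ∀ n, G.Adj (f n) u ↔ n = m) : u ∉ Aset G k (goodRot f j) (k - 1) := fun h => by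
  obtain ⟨h₀, h₂⟩ := adj_of_mem_Aset_pred hk5 h
  exact ZMod.two_ne_zero_of_odd hk (by omega)
    (by linear_combination (hm _).1 h₀ - (hm _).1 h₂)

theorem NoShortOddCycle.eq_sub_three_of_mem_Aset_two (hG : NoShortOddCycle G k) (hk : Odd k)
    (hk5 : 5 ≤ k) (hf : ∀ i, G.Adj (f i) (f (i + 1)))
    (hm : ∀ n, G.Adj (f n) u ↔ n = m - 1 ∨ n = m + 1) (h : u ∈ Aset G k (goodRot f j) 2) :
    j = m - 3 := by
  obtain ⟨hj, x, hx, hxu⟩ := adj_of_mem_Aset_two (by omega) h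
  rw [hm] at hj
  have hlo : j = m - 3 ∨ j = m - 5 := by
    rcases hG.eq_add_one_or_eq_add_three hk hf hx hxu ((hm _).2 (Or.inl rfl)).symm with
      h | h | h | h
    · exact Or.inl (by linear_combination -h)
    · exact absurd (Or.inl (by linear_combination h)) hj
    · exact Or.inr (by linear_combination -h)
    · exact absurd (Or.inr (by linear_combination h)) hj
  have hhi : j = m - 3 ∨ j = m + 3 := by
    rcases hG.eq_add_one_or_eq_add_three hk hf hx hxu ((hm _).2 (Or.inr rfl)).symm with
      h | h | h | h
    · exact absurd (Or.inl (by linear_combination -h)) hj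
    · exact absurd (Or.inr (by linear_combination h)) hj
    · exact Or.inl (by linear_combination -h)
    · exact Or.inr (by linear_combination h)
  have h8 : ((8 : ℕ) : ZMod k) ≠ 0 :=
    ZMod.natCast_ne_zero_of_odd hk (by norm_num) (by omega) (by decide)
  rcases hlo with hlo | hlo
  · exact hlo
  rcases hhi with hhi | hhi
  · exact hhi
  exact absurd (by push_cast; linear_combination hlo - hhi) h8

theorem eq_sub_two_of_mem_Aset_three (hk : Odd k) (hk4 : 4 ≤ k)
    (hm : ∀ n, G.Adj (f n) u ↔ n = m - 1 ∨ n = m + 1) (h : u ∈ Aset G k (goodRot f j) 3) :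
    j = m - 2 := by
  obtain ⟨h₁, h₃⟩ := adj_of_mem_Aset_three hk4 h
  rcases (hm _).1 h₁ with h₁ | h₁
  · linear_combination h₁
  rcases (hm _).1 h₃ with h₃ | h₃
  · exact absurd (by linear_combination h₃ - h₁) (ZMod.four_ne_zero_of_odd hk (by omega))
  · exact absurd (by linear_combination h₃ - h₁) (ZMod.two_ne_zero_of_odd hk (by omega))

theorem eq_add_one_of_mem_Aset_pred (hk : Odd k) (hk5 : 5 ≤ k)
    (hm : ∀ n, G.Adj (f n) u ↔ n = m - 1 ∨ n = m + 1)
    (h : u ∈ Aset G k (goodRot f j) (k - 1)) : j = m + 1 := by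
  obtain ⟨h₀, h₂⟩ := adj_of_mem_Aset_pred hk5 h
  rcases (hm _).1 h₀ with h₀ | h₀
  swap
  · exact h₀
  rcases (hm _).1 h₂ with h₂ | h₂
  · exact absurd (by linear_combination h₀ - h₂) (ZMod.two_ne_zero_of_odd hk (by omega))
  · exact absurd (by linear_combination h₀ - h₂) (ZMod.four_ne_zero_of_odd hk (by omega))

end CycleNeighbors

open scoped Classical in
noncomputable def hitCount {V : Type*} (G : SimpleGraph V) (k : ℕ) [NeZero k] (f : ZMod k → V)
    (u : V) (i : ℕ) : ℕ :=
  #{j : ZMod k | u ∈ Aset G k (goodRot f j) i}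

section HitCounts

open scoped Classical

variable {V : Type*} {G : SimpleGraph V} {k : ℕ} [NeZero k] {f : ZMod k → V} {u : V}

theorem NoShortOddCycle.hitCount_le_one (hG : NoShortOddCycle G k) (hk : Odd k)
    (hf : ∀ i, G.Adj (f i) (f (i + 1))) {i : ℕ} (hi : 4 ≤ i) (hik : i ≤ k - 2) :
    hitCount G k f u i ≤ 1 := by
  refine card_le_one.2 fun j hj j' hj' => ?_
  obtain ⟨ha, hna⟩ := adj_of_mem_Aset_of_le hi hik (mem_filter.1 hj).2
  obtain ⟨ha', hna'⟩ := adj_of_mem_Aset_of_le hi hik (mem_filter.1 hj').2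
  have hcast : ((i - 1 : ℕ) : ZMod k) = ((i - 3 : ℕ) : ZMod k) + 2 := by
    rw [show i - 1 = i - 3 + 2 by omega]; push_cast; rfl
  by_contra hne
  rcases hG.eq_add_two_or_eq_add_two hk hf ha ha'.symm (by rwa [Ne, add_left_inj]) with h | h
  · exact hna' ((by linear_combination h - hcast : j' + ↑(i - 3) = j + ↑(i - 1)) ▸ ha)
  · exact hna ((by linear_combination h - hcast : j + ↑(i - 3) = j' + ↑(i - 1)) ▸ ha')

theorem NoShortOddCycle.sum_hitCount_Icc_le (hG : NoShortOddCycle G k) (hk : Odd k)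
    (hf : ∀ i, G.Adj (f i) (f (i + 1))) :
    ∑ i ∈ Icc 4 (k - 2), hitCount G k f u i ≤ k - 5 :=
  calc _ ≤ #(Icc 4 (k - 2)) • 1 := sum_le_card_nsmul _ _ _ fun i hi =>
        hG.hitCount_le_one hk hf (mem_Icc.1 hi).1 (mem_Icc.1 hi).2
    _ = k - 5 := by rw [Nat.card_Icc, smul_eq_mul, mul_one]; omega

theorem NoShortOddCycle.hitCount_two_lt (hG : NoShortOddCycle G k) (hk : Odd k) (hk7 : 7 ≤ k)
    (hf : ∀ i, G.Adj (f i) (f (i + 1))) : hitCount G k f u 2 < k := by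
  have hmiss : ∃ j, u ∉ Aset G k (goodRot f j) 2 := by
    by_contra! hall
    obtain ⟨-, x, hx, hxu⟩ := adj_of_mem_Aset_two (by omega) (hall 0)
    obtain ⟨-, y, hy, hyu⟩ := adj_of_mem_Aset_two (by omega) (hall 1)
    exact hG.not_adj_adj_adj_adj_add_one hk hk7 hf (by simpa using hx) hxu hyu.symm hy.symm
  obtain ⟨j, hj⟩ := hmiss
  calc hitCount G k f u 2 < #(univ : Finset (ZMod k)) :=
        card_lt_card (filter_ssubset.2 ⟨j, mem_univ j, hj⟩)
    _ = k := by rw [card_univ, ZMod.card]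

lemma sum_hitCount_eq_of_forall_not_adj (hk : 5 ≤ k) (h0 : ∀ n, ¬ G.Adj (f n) u) :
    ∑ i ∈ Icc 2 (k - 1), hitCount G k f u i = hitCount G k f u 2 := by
  refine sum_eq_single_of_mem 2 (mem_Icc.2 ⟨le_rfl, by omega⟩) fun i hi hi2 => ?_
  obtain ⟨hi, hik⟩ := mem_Icc.1 hi
  refine card_eq_zero.2 (filter_eq_empty_iff.2 fun j _ hj => ?_)
  obtain rfl | rfl | hmid : i = 3 ∨ i = k - 1 ∨ (4 ≤ i ∧ i ≤ k - 2) := by omega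
  · exact h0 _ (adj_of_mem_Aset_three (by omega) hj).1
  · exact h0 _ (adj_of_mem_Aset_pred hk hj).1
  · exact h0 _ (adj_of_mem_Aset_of_le hmid.1 hmid.2 hj).1

theorem NoShortOddCycle.card_adj_add_two_mul_sum_hitCount_le (hG : NoShortOddCycle G k)
    (hk : Odd k) (hk7 : 7 ≤ k) (hf : ∀ i, G.Adj (f i) (f (i + 1))) (u : V) :
    #{j | G.Adj (f j) u} + 2 * ∑ i ∈ Icc 2 (k - 1), hitCount G k f u i ≤ 2 * (k - 1) := by
  have hmid := hG.sum_hitCount_Icc_le hk hf (u := u)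
  rcases hG.cycle_neighbors_cases hk (by omega) hf u with h0 | ⟨m, hm⟩ | ⟨m, hm⟩
  · have hadj : #{j | G.Adj (f j) u} = 0 := by simp [h0]
    have := hG.hitCount_two_lt hk hk7 hf (u := u)
    rw [sum_hitCount_eq_of_forall_not_adj (by omega) h0]
    omega
  · have hadj : #{j | G.Adj (f j) u} ≤ 1 := card_filter_le_one_of_forall_eq fun j => (hm j).1
    have h2 : hitCount G k f u 2 ≤ 3 :=
      (card_filter_le_card_of_forall_mem (s := {m - 2, m - 4, m + 2}) fun j hj => by
        simpa using hG.eq_of_mem_Aset_two_of_adj_iff_eq hk (by omega) hf hm hj).trans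
        card_le_three
    have h3 : hitCount G k f u 3 = 0 := card_eq_zero.2 (filter_eq_empty_iff.2 fun j _ =>
      notMem_Aset_three_of_adj_iff_eq hk (by omega) hm)
    have hpred : hitCount G k f u (k - 1) = 0 := card_eq_zero.2 (filter_eq_empty_iff.2 fun j _ =>
      notMem_Aset_pred_of_adj_iff_eq hk (by omega) hm)
    rw [sum_Icc_two_pred_eq (by omega)]
    omega
  · have hadj : #{j | G.Adj (f j) u} ≤ 2 :=
      (card_filter_le_card_of_forall_mem (s := {m - 1, m + 1}) fun j hj => by
        simpa using (hm j).1 hj).trans card_le_two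
    have h2 : hitCount G k f u 2 ≤ 1 := card_filter_le_one_of_forall_eq fun j =>
      hG.eq_sub_three_of_mem_Aset_two hk (by omega) hf hm
    have h3 : hitCount G k f u 3 ≤ 1 := card_filter_le_one_of_forall_eq fun j =>
      eq_sub_two_of_mem_Aset_three hk (by omega) hm
    have hpred : hitCount G k f u (k - 1) ≤ 1 := card_filter_le_one_of_forall_eq fun j =>
      eq_add_one_of_mem_Aset_pred hk (by omega) hm
    rw [sum_Icc_two_pred_eq (by omega)]
    omega

variable [Fintype V]

lemma sum_natCard_Aset_eq_sum_hitCount (hk : 4 ≤ k) :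
    ∑ j : ZMod k, (Nat.card (Aset G k (goodRot f j) 1) +
      2 * ∑ i ∈ Icc 2 (k - 1), Nat.card (Aset G k (goodRot f j) i)) =
      ∑ u, (#{j | G.Adj (f j) u} + 2 * ∑ i ∈ Icc 2 (k - 1), hitCount G k f u i) :=
  calc _ = ∑ j : ZMod k, Nat.card (Aset G k (goodRot f j) 1) +
        2 * ∑ i ∈ Icc 2 (k - 1), ∑ j : ZMod k, Nat.card (Aset G k (goodRot f j) i) := by
        rw [sum_add_distrib, ← mul_sum, sum_comm]
    _ = ∑ u, #{j | G.Adj (f j) u} + 2 * ∑ i ∈ Icc 2 (k - 1), ∑ u, hitCount G k f u i := by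
        simp only [sum_natCard_eq_sum_card_filter, mem_Aset_one hk]
        rfl
    _ = _ := by rw [sum_comm (s := Icc 2 (k - 1)), sum_add_distrib, mul_sum]

theorem NoShortOddCycle.sum_natCard_Aset_le (hG : NoShortOddCycle G k) (hk : Odd k)
    (hk7 : 7 ≤ k) (hf : ∀ i, G.Adj (f i) (f (i + 1))) :
    ∑ j : ZMod k, (Nat.card (Aset G k (goodRot f j) 1) +
      2 * ∑ i ∈ Icc 2 (k - 1), Nat.card (Aset G k (goodRot f j) i)) ≤
      Fintype.card V * (2 * (k - 1)) := by
  rw [sum_natCard_Aset_eq_sum_hitCount (by omega), ← smul_eq_mul, ← card_univ, ← sum_const]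
  exact sum_le_sum fun u _ => hG.card_adj_add_two_mul_sum_hitCount_le hk hk7 hf u

end HitCounts

/-- For a fixed `k`-cycle `v_0 v_1 … v_{k-1}` with good sequences `D_j` and
`n_{i,j} = |A_i(D_j)|`, one has `∑_{j=0}^{k-1} (n_{1,j}/2 + ∑_{i=2}^{k-1} n_{i,j}) ≤ n(k-1)`. -/
theorem sum_of_contributions_le {V : Type*} [Fintype V] (k : ℕ) (hodd : Odd k)
    (hk : 7 ≤ k) (G : SimpleGraph V) (hG : NoShortOddCycle G k)
    (f : ZMod k → V) (hf : IsCycleMap G f) :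
    ∑ j ∈ Finset.range k,
        ((Nat.card ↥(Aset G k (goodRot f (j : ZMod k)) 1) : ℝ) / 2 +
          ∑ i ∈ Finset.Icc 2 (k - 1),
            (Nat.card ↥(Aset G k (goodRot f (j : ZMod k)) i) : ℝ)) ≤
      (Fintype.card V : ℝ) * ((k : ℝ) - 1) := by
  have : NeZero k := ⟨by omega⟩
  have hcast := (Nat.cast_le (α := ℝ)).2 (hG.sum_natCard_Aset_le hodd hk hf.2)
  push_cast [Nat.cast_sub (by omega : 1 ≤ k)] at hcast
  rw [sum_range_natCast_eq_sum_univ k (fun j => (Nat.card (Aset G k (goodRot f j) 1) : ℝ) / 2 +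
    ∑ i ∈ Icc 2 (k - 1), (Nat.card (Aset G k (goodRot f j) i) : ℝ))]
  have hhalf (x y : ℝ) : x / 2 + y = (x + 2 * y) / 2 := by ring
  simp only [hhalf, ← sum_div]
  linarith
end

section
/- Let k ≥ 7 be odd, let G be a graph containing no odd cycle of length less than k, let C be the vertex set of a k-cycle in G, and let w be any vertex of G. Then there are at most three vertices of C at graph distance exactly 2 from w in G, and no two vertices of C at distance exactly 2 from w are adjacent. -/
/-!
An odd closed walk with a repeated vertex splits there into two shorter closed walks, one of
them odd; hence in `G` every odd closed walk has length at least `k`. If `f i` and `f j` are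
both at distance `2` from `w`, two paths of length `2` through `w` close the two arcs of the
cycle between them into closed walks of lengths `d + 4` and `k - d + 4`. As `k` is odd, one of
them is odd, which forces `j - i ∈ {±2, ±4}` in `ZMod k`; an edge `f i f j` would likewise
give an odd closed walk of length `5`. Since `6` and `8` are not of the form `0, ±2, ±4` modulo
`k`, a subset of `ZMod k` with all differences in `{±2, ±4}` lies in a window of three
consecutive even offsets.
-/

theorem ZMod.ofNat_ne_zero_of_even {k : ℕ} (m : ℕ) [m.AtLeastTwo] (hk : Odd k) (hm : Even m)
    (hmk : m < 2 * k) : (ofNat(m) : ZMod k) ≠ 0 := by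
  rw [← Nat.cast_ofNat, Ne, ZMod.natCast_eq_zero_iff]
  intro hdvd
  obtain rfl : m = k := Nat.eq_of_dvd_of_lt_two_mul (NeZero.ne m) hdvd hmk
  exact Nat.not_even_iff_odd.mpr hk hm

theorem ZMod.natCast_eq_neg_of_add_eq {k a b : ℕ} (h : a + b = k) : (a : ZMod k) = -b := by
  rw [eq_neg_iff_add_eq_zero, ← Nat.cast_add, h, ZMod.natCast_self]

theorem Set.ncard_le_three_of_subset {α : Type*} {S : Set α} {x y z : α} (h : S ⊆ {x, y, z}) :
    S.ncard ≤ 3 := by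
  grw [Set.ncard_le_ncard h, Set.ncard_insert_le, Set.ncard_insert_le, Set.ncard_singleton]

section SubMem

variable {k : ℕ} {S : Set (ZMod k)}

theorem ZMod.sub_ne_six_and_ne_eight (hodd : Odd k) (hk : 7 ≤ k)
    (hS : ∀ i ∈ S, ∀ j ∈ S, i ≠ j → j - i ∈ ({2, 4, -2, -4} : Set (ZMod k)))
    {i j : ZMod k} (hi : i ∈ S) (hj : j ∈ S) : j - i ≠ 6 ∧ j - i ≠ 8 := by
  have hD : j - i ∈ ({0, 2, 4, -2, -4} : Set (ZMod k)) := by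
    rcases eq_or_ne i j with rfl | hij
    · simp
    · exact Set.mem_insert_of_mem _ (hS i hi j hj hij)
  simp only [Set.mem_insert_iff, Set.mem_singleton_iff] at hD
  constructor <;> intro hc <;> rcases hD with hd | hd | hd | hd | hd <;>
  · have h := sub_eq_zero.mpr (hc.symm.trans hd)
    ring_nf at h
    -- the unified `m` is a raw literal, opaque to `omega`, hence the detour through `decide`
    exact ZMod.ofNat_ne_zero_of_even _ hodd (by decide) (lt_of_lt_of_le (by decide)
      (by omega : 14 ≤ 2 * k)) h

theorem ZMod.ncard_le_three_of_sub_mem (hodd : Odd k) (hk : 7 ≤ k)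
    (hS : ∀ i ∈ S, ∀ j ∈ S, i ≠ j → j - i ∈ ({2, 4, -2, -4} : Set (ZMod k))) :
    S.ncard ≤ 3 := by
  have far {i j : ZMod k} (hi : i ∈ S) (hj : j ∈ S) :=
    ZMod.sub_ne_six_and_ne_eight hodd hk hS hi hj
  rcases S.eq_empty_or_nonempty with rfl | ⟨a, ha⟩
  · simp
  have near : ∀ j ∈ S, j = a ∨ j = a + 2 ∨ j = a + 4 ∨ j = a - 2 ∨ j = a - 4 := by
    intro j hj
    rcases eq_or_ne a j with rfl | haj
    · exact Or.inl rfl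
    have h := hS a ha j hj haj
    simp only [Set.mem_insert_iff, Set.mem_singleton_iff, sub_eq_iff_eq_add'] at h
    rcases h with h | h | h | h <;> simp [h, sub_eq_add_neg]
  by_cases hp : a + 4 ∈ S
  · refine Set.ncard_le_three_of_subset (x := a) (y := a + 2) (z := a + 4) fun j hj ↦ ?_
    rcases near j hj with rfl | rfl | rfl | rfl | rfl
    · simp
    · simp
    · simp
    · exact absurd (by ring) (far hj hp).1
    · exact absurd (by ring) (far hj hp).2
  by_cases hm : a - 4 ∈ S
  · refine Set.ncard_le_three_of_subset (x := a) (y := a - 2) (z := a - 4) fun j hj ↦ ?_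
    rcases near j hj with rfl | rfl | rfl | rfl | rfl
    · simp
    · exact absurd (by ring) (far hm hj).1
    · exact absurd hj hp
    · simp
    · simp
  · refine Set.ncard_le_three_of_subset (x := a) (y := a + 2) (z := a - 2) fun j hj ↦ ?_
    rcases near j hj with rfl | rfl | rfl | rfl | rfl
    · simp
    · simp
    · exact absurd hj hp
    · simp
    · exact absurd hj hm

end SubMem

namespace SimpleGraph

variable {V : Type*} {G : SimpleGraph V}

theorem adj_comp_zmodVal {n : ℕ} [NeZero n] {g : ℕ → V}
    (hg : ∀ m < n, G.Adj (g m) (g (m + 1))) (hgn : g n = g 0) (i : ZMod n) :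
    G.Adj (g i.val) (g (i + 1).val) := by
  have hi := ZMod.val_lt i
  rw [ZMod.val_add, ZMod.val_one_eq_one_mod, Nat.add_mod_mod]
  rcases (show i.val + 1 ≤ n from hi).lt_or_eq with h | h
  · rw [Nat.mod_eq_of_lt h]
    exact hg _ hi
  · rw [h, Nat.mod_self, ← hgn]
    simpa only [h] using hg _ hi

theorem adj_add_zmodVal {R : Type*} [AddMonoidWithOne R] {f : R → V}
    (hf : ∀ x, G.Adj (f x) (f (x + 1))) {a : R} {d : ℕ} [NeZero d] (had : f (a + d) = f a)
    (i : ZMod d) : G.Adj (f (a + i.val)) (f (a + (i + 1).val)) :=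
  adj_comp_zmodVal (g := fun m ↦ f (a + m))
    (fun m _ ↦ by simpa only [Nat.cast_succ, add_assoc] using hf (a + m)) (by simpa using had) i

theorem exists_walk_length_eq_of_adj_add_one {R : Type*} [AddMonoidWithOne R] {f : R → V}
    (hf : ∀ x, G.Adj (f x) (f (x + 1))) (x : R) :
    ∀ d : ℕ, ∃ p : G.Walk (f x) (f (x + d)), p.length = d
  | 0 => ⟨Walk.nil.copy rfl (by simp), by simp⟩
  | d + 1 => by
    obtain ⟨p, hp⟩ := exists_walk_length_eq_of_adj_add_one hf x d
    exact ⟨(p.concat (hf _)).copy rfl (by rw [Nat.cast_succ, add_assoc]), by simp [hp]⟩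

end SimpleGraph

open SimpleGraph

namespace NoShortOddCycle

variable {V : Type*} {G : SimpleGraph V} {k : ℕ}

theorem le_of_odd_of_forall_adj (hG : NoShortOddCycle G k) {n : ℕ} (hn : Odd n)
    (f : ZMod n → V) (hf : ∀ i, G.Adj (f i) (f (i + 1))) : k ≤ n := by
  induction n using Nat.strong_induction_on with
  | _ n ih =>
  have : NeZero n := ⟨hn.pos.ne'⟩
  by_cases hinj : Function.Injective f
  · have hn1 : n ≠ 1 := by
      rintro rfl
      have h := hf 0
      rw [Subsingleton.elim (0 + 1 : ZMod 1) 0] at h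
      exact G.loopless.irrefl _ h
    by_contra! hnk
    exact hG n hn (by obtain ⟨m, rfl⟩ := hn; omega) hnk f ⟨hinj, hf⟩
  obtain ⟨a, d, hd0, hdn, hcl⟩ :
      ∃ a : ZMod n, ∃ d : ℕ, 0 < d ∧ d < n ∧ f (a + d) = f a := by
    obtain ⟨a, b, hab, hne⟩ := Function.not_injective_iff.mp hinj
    refine ⟨a, (b - a).val, ?_, ZMod.val_lt _, by simp [hab]⟩
    simpa [Nat.pos_iff_ne_zero, sub_eq_zero] using hne.symm
  have : NeZero d := ⟨hd0.ne'⟩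
  have : NeZero (n - d) := ⟨by omega⟩
  have hcl' : f (a + d + (n - d : ℕ)) = f (a + d) := by
    rw [add_assoc, ← Nat.cast_add, Nat.add_sub_cancel' hdn.le, ZMod.natCast_self, add_zero, hcl]
  rcases Nat.even_or_odd d with hd | hd
  · exact (ih (n - d) (by omega) (Nat.Odd.sub_even hdn.le hn hd) _
      (adj_add_zmodVal hf hcl')).trans (Nat.sub_le n d)
  · exact (ih d hdn hd _ (adj_add_zmodVal hf hcl)).trans hdn.le

theorem le_length_of_odd (hG : NoShortOddCycle G k) {u : V} (p : G.Walk u u)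
    (hp : Odd p.length) : k ≤ p.length :=
  have : NeZero p.length := ⟨hp.pos.ne'⟩
  hG.le_of_odd_of_forall_adj hp _
    (adj_comp_zmodVal (g := p.getVert) (fun _ hm ↦ p.adj_getVert_succ hm) (by simp))

theorem le_length_add_four (hG : NoShortOddCycle G k) {w u v : V} (hu : G.dist w u = 2)
    (hv : G.dist w v = 2) (p : G.Walk u v) (hp : Odd p.length) : k ≤ p.length + 4 := by
  obtain ⟨q, hq⟩ := exists_walk_of_dist_ne_zero (hu.trans_ne two_ne_zero)
  obtain ⟨r, hr⟩ := exists_walk_of_dist_ne_zero (hv.trans_ne two_ne_zero)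
  have hlen : (q.append (p.append r.reverse)).length = p.length + 4 := by
    simp only [Walk.length_append, Walk.length_reverse, hq, hr, hu, hv]
    ring
  exact hlen ▸ hG.le_length_of_odd _ (hlen ▸ hp.add_even (by decide))

theorem not_adj_of_dist_eq_two (hG : NoShortOddCycle G k) (hk : 6 ≤ k) {w u v : V}
    (hu : G.dist w u = 2) (hv : G.dist w v = 2) : ¬ G.Adj u v := fun huv ↦ by
  have := hG.le_length_add_four hu hv huv.toWalk (by simp)
  simp only [Walk.length_cons, Walk.length_nil] at this
  omega

theorem le_add_four_of_dist_eq_two (hG : NoShortOddCycle G k) {f : ZMod k → V}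
    (hf : ∀ i, G.Adj (f i) (f (i + 1))) {w : V} {i j : ZMod k} (hi : G.dist w (f i) = 2)
    (hj : G.dist w (f j) = 2) {d : ℕ} (hd : i + d = j) (hdodd : Odd d) : k ≤ d + 4 := by
  obtain ⟨p, hp⟩ := exists_walk_length_eq_of_adj_add_one hf i d
  simpa [hp] using hG.le_length_add_four hi hj (p.copy rfl (congrArg f hd)) (by simpa [hp])

theorem sub_mem_of_dist_eq_two (hG : NoShortOddCycle G k) (hodd : Odd k) {f : ZMod k → V}
    (hf : ∀ i, G.Adj (f i) (f (i + 1))) {w : V} {i j : ZMod k} (hi : G.dist w (f i) = 2)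
    (hj : G.dist w (f j) = 2) (hij : i ≠ j) : j - i ∈ ({2, 4, -2, -4} : Set (ZMod k)) := by
  have : NeZero k := ⟨hodd.pos.ne'⟩
  obtain ⟨d, hd0, hdk, hd⟩ : ∃ d : ℕ, d ≠ 0 ∧ d < k ∧ j - i = d :=
    ⟨(j - i).val, by simpa [sub_eq_zero] using hij.symm, ZMod.val_lt _, by simp⟩
  have hk := Nat.odd_iff.mp hodd
  have hlen : d = 2 ∨ d = 4 ∨ d + 2 = k ∨ d + 4 = k := by
    rcases Nat.even_or_odd d with hdeven | hdodd
    · have hji : j + (k - d : ℕ) = i := by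
        rw [ZMod.natCast_eq_neg_of_add_eq (Nat.sub_add_cancel hdk.le), ← hd]
        ring
      rw [Nat.even_iff] at hdeven
      have := hG.le_add_four_of_dist_eq_two hf hj hi hji (Nat.odd_iff.mpr (by omega))
      omega
    · have := hG.le_add_four_of_dist_eq_two hf hi hj (by rw [← hd, add_sub_cancel]) hdodd
      rw [Nat.odd_iff] at hdodd
      omega
  rcases hlen with h | h | h | h
  · simp [hd, h]
  · simp [hd, h]
  · simp [hd, ZMod.natCast_eq_neg_of_add_eq h]
  · simp [hd, ZMod.natCast_eq_neg_of_add_eq h]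

end NoShortOddCycle

/-- If `k ≥ 7` is odd, `G` has no odd cycle of length less than `k`, `C` is the vertex set
of a `k`-cycle `f` in `G` and `w` is any vertex, then at most three vertices of `C` are at
graph distance exactly `2` from `w`, and no two vertices of `C` at distance exactly `2`
from `w` are adjacent. -/
theorem distance_two_vertices_on_cycle {V : Type*} (k : ℕ) (hodd : Odd k) (hk : 7 ≤ k)
    (G : SimpleGraph V) (hG : NoShortOddCycle G k) (f : ZMod k → V)
    (hf : IsCycleMap G f) (w : V) :
    Nat.card ↥{i : ZMod k | G.dist w (f i) = 2} ≤ 3 ∧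
      ∀ i j : ZMod k, G.dist w (f i) = 2 → G.dist w (f j) = 2 → ¬ G.Adj (f i) (f j) := by
  refine ⟨?_, fun i j hi hj ↦ hG.not_adj_of_dist_eq_two (by omega) hi hj⟩
  rw [Nat.card_coe_set_eq]
  exact ZMod.ncard_le_three_of_sub_mem hodd hk fun i hi j hj hij ↦
    hG.sub_mem_of_dist_eq_two hodd hf.2 hi hj hij
end

section
/- Let k ≥ 7 be odd, let G be a graph containing no odd cycle of length less than k, and let C = {v_0, v_1, …, v_{k−1}} be the vertex set of a k-cycle in G (in cyclic order). If a vertex w of G has exactly two neighbors in C, then these two neighbors are at distance two along the cycle, i.e., they equal v_{a−1} and v_{a+1} for some index a (indices mod k). -/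
lemma aux_no_odd_chord {V : Type*} {k : ℕ} (hk : 7 ≤ k) {G : SimpleGraph V}
    (hG : NoShortOddCycle G k) {f : ZMod k → V} (hf : IsCycleMap G f) {w : V}
    (hwf : ∀ j, f j ≠ w) {x : ZMod k} {e : ℕ} (he : Odd e) (he4 : e + 4 ≤ k)
    (hx : G.Adj w (f x)) (hy : G.Adj w (f (x + (e : ZMod k)))) : False := by
  haveI : NeZero k := ⟨by omega⟩
  obtain ⟨m, hm⟩ := he
  have he1 : 1 ≤ e := by omega
  haveI : Fact (1 < e + 2) := ⟨by omega⟩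
  set g : ZMod (e + 2) → V := fun j => if j = 0 then w else f (x + ((j.val - 1 : ℕ) : ZMod k))
    with hg
  have hval : ∀ j : ZMod (e + 2), j.val < e + 2 := fun j => ZMod.val_lt j
  have hneg1 : ((e + 1 : ℕ) : ZMod (e + 2)) = -1 := by
    have h := ZMod.natCast_self (e + 2)
    push_cast at h ⊢
    linear_combination h
  refine hG (e + 2) ⟨m + 1, by omega⟩ (by omega) (by omega) g ⟨?_, ?_⟩
  · intro j₁ j₂ h
    simp only [hg] at h
    by_cases h1 : j₁ = 0
    · by_cases h2 : j₂ = 0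
      · rw [h1, h2]
      · rw [if_pos h1, if_neg h2] at h
        exact absurd h.symm (hwf _)
    · by_cases h2 : j₂ = 0
      · rw [if_neg h1, if_pos h2] at h
        exact absurd h (hwf _)
      · rw [if_neg h1, if_neg h2] at h
        have hc : ((j₁.val - 1 : ℕ) : ZMod k) = ((j₂.val - 1 : ℕ) : ZMod k) :=
          add_left_cancel (hf.1 h)
        have hv1 : j₁.val - 1 < k := by have := hval j₁; omega
        have hv2 : j₂.val - 1 < k := by have := hval j₂; omega
        have heq : j₁.val - 1 = j₂.val - 1 := by
          have := congrArg ZMod.val hc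
          rwa [ZMod.val_cast_of_lt hv1, ZMod.val_cast_of_lt hv2] at this
        have hn1 : j₁.val ≠ 0 := fun hh => h1 ((ZMod.val_eq_zero j₁).mp hh)
        have hn2 : j₂.val ≠ 0 := fun hh => h2 ((ZMod.val_eq_zero j₂).mp hh)
        exact ZMod.val_injective _ (by omega)
  · intro i
    by_cases h0 : i = 0
    · subst h0
      have h1 : ((0 : ZMod (e+2)) + 1) = 1 := by ring
      have hv1 : ((1 : ZMod (e + 2)).val - 1 : ℕ) = 0 := by rw [ZMod.val_one]
      simp only [hg, h1, if_pos rfl, if_neg (one_ne_zero), hv1]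
      simpa using hx
    · by_cases h0' : i + 1 = 0
      · have hieq : i = -1 := by linear_combination h0'
        have hlast : i.val - 1 = e := by
          rw [hieq, ← hneg1, ZMod.val_cast_of_lt (by omega)]
          omega
        simp only [hg, if_neg h0, if_pos h0', hlast]
        exact hy.symm
      · have hi1 : i.val ≠ 0 := fun hh => h0 ((ZMod.val_eq_zero i).mp hh)
        have hi2 : i.val < e + 1 := by
          by_contra hcon
          apply h0'
          have hiv : i.val = e + 1 := by have := hval i; omega
          have : i = -1 := by
            conv_lhs => rw [← ZMod.natCast_rightInverse i]
            rw [hiv]; exact hneg1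
          rw [this]; ring
        have hsucc : (i + 1).val = i.val + 1 := by
          rw [ZMod.val_add, ZMod.val_one, Nat.mod_eq_of_lt (by omega)]
        have hne' : i + 1 ≠ 0 := h0'
        simp only [hg, if_neg h0, if_neg hne', hsucc]
        have hcast : ((i.val - 1 : ℕ) : ZMod k) + 1 = ((i.val + 1 - 1 : ℕ) : ZMod k) := by
          have : i.val + 1 - 1 = (i.val - 1) + 1 := by omega
          rw [this]; push_cast; ring
        have := hf.2 (x + ((i.val - 1 : ℕ) : ZMod k))
        rwa [add_assoc, hcast] at this

/-- If `k ≥ 7` is odd, `G` has no odd cycle of length less than `k`, and a vertex `w` has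
exactly two neighbours on a `k`-cycle `v_0 v_1 … v_{k-1}` of `G`, then these two neighbours
are at distance two along the cycle: they are `v_{a-1}` and `v_{a+1}` for some index `a`. -/
theorem two_neighbors_at_cycle_distance_two {V : Type*} (k : ℕ) (hodd : Odd k)
    (hk : 7 ≤ k) (G : SimpleGraph V) (hG : NoShortOddCycle G k) (f : ZMod k → V)
    (hf : IsCycleMap G f) (w : V)
    (hw : Nat.card ↥{i : ZMod k | G.Adj w (f i)} = 2) :
    ∃ a : ZMod k, {i : ZMod k | G.Adj w (f i)} = {a - 1, a + 1} := by
  haveI : NeZero k := ⟨by omega⟩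
  obtain ⟨n, hn⟩ := hodd
  rw [Nat.card_coe_set_eq, Set.ncard_eq_two] at hw
  obtain ⟨a, b, hab, hS⟩ := hw
  have ha : G.Adj w (f a) := by
    have : a ∈ {i : ZMod k | G.Adj w (f i)} := hS ▸ Set.mem_insert a {b}
    exact this
  have hb : G.Adj w (f b) := by
    have : b ∈ {i : ZMod k | G.Adj w (f i)} := hS ▸ Set.mem_insert_of_mem a rfl
    exact this
  by_cases hwf : ∃ j, f j = w
  · obtain ⟨j, hj⟩ := hwf
    refine ⟨j, ?_⟩
    rw [hS]
    have h1 : j - 1 ∈ {i : ZMod k | G.Adj w (f i)} := by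
      have := hf.2 (j - 1)
      rw [sub_add_cancel, hj] at this
      exact this.symm
    have h2 : j + 1 ∈ {i : ZMod k | G.Adj w (f i)} := by
      have := hf.2 j
      rw [hj] at this
      exact this
    rw [hS] at h1 h2
    have hne : j - 1 ≠ j + 1 := by
      intro h
      have h2 : ((2 : ℕ) : ZMod k) = 0 := by push_cast; linear_combination -h
      have hdvd := (ZMod.natCast_eq_zero_iff 2 k).mp h2
      have := Nat.le_of_dvd (by norm_num) hdvd
      omega
    simp only [Set.mem_insert_iff, Set.mem_singleton_iff] at h1 h2
    rcases h1 with h1 | h1 <;> rcases h2 with h2 | h2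
    · exact absurd (h1.trans h2.symm) hne
    · rw [← h1, ← h2]
    · rw [← h1, ← h2, Set.pair_comm]
    · exact absurd (h1.trans h2.symm) hne
  · push_neg at hwf
    have hwf' : ∀ j, f j ≠ w := fun j => hwf j
    set d := (b - a).val with hd
    have hdk : d < k := ZMod.val_lt _
    have hdcast : ((d : ℕ) : ZMod k) = b - a := ZMod.natCast_rightInverse _
    have hd0 : d ≠ 0 := by
      intro h
      apply hab
      have : ((d : ℕ) : ZMod k) = 0 := by rw [h]; simp
      rw [hdcast] at this
      linear_combination -this
    have hba : b = a + (d : ZMod k) := by rw [hdcast]; ring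
    rcases Nat.even_or_odd d with hde | hdo
    · -- d even, so k - d is odd
      obtain ⟨p, hp⟩ := hde
      have hkd : Odd (k - d) := ⟨n - p, by omega⟩
      have hacast : a = b + ((k - d : ℕ) : ZMod k) := by
        have : ((k - d : ℕ) : ZMod k) = a - b := by
          push_cast [Nat.cast_sub hdk.le]
          rw [ZMod.natCast_self, hdcast]
          ring
        rw [this]; ring
      by_cases hd2 : d = 2
      · refine ⟨a + 1, ?_⟩
        rw [hS, hba, hd2]
        have : ((2 : ℕ) : ZMod k) = 2 := by push_cast; ring
        rw [this]
        congr 1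
        · ring
        · congr 1; ring
      · exfalso
        have h4 : (k - d) + 4 ≤ k := by omega
        exact aux_no_odd_chord hk hG hf hwf' hkd h4 hb (hacast ▸ ha)
    · by_cases hd2 : d = k - 2
      · refine ⟨a - 1, ?_⟩
        rw [hS, hba, hd2]
        have : ((k - 2 : ℕ) : ZMod k) = -2 := by
          push_cast [Nat.cast_sub (by omega : 2 ≤ k)]
          rw [ZMod.natCast_self]
          ring
        rw [this]
        have h1 : a + -2 = a - 1 - 1 := by ring
        have h2 : a = a - 1 + 1 := by ring
        rw [h1, Set.pair_comm, ← h2]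
      · exfalso
        obtain ⟨q, hq⟩ := id hdo
        have h4 : d + 4 ≤ k := by omega
        exact aux_no_odd_chord hk hG hf hwf' hdo h4 ha (hba ▸ hb)
end

section
/- Let k ≥ 7 be odd, let G be a graph on n vertices containing no odd cycle of length less than k, fix a k-cycle v_0v_1…v_{k−1} in G with vertex set C and good sequences D_j (0 ≤ j ≤ k−1), and for a vertex w define its contribution c(w) = (1/2)·|{j : w ∈ A_1(D_j)}| + ∑_{i=2}^{k−1} |{j : w ∈ A_i(D_j)}|. If w has no neighbors in C, then c(w) ≤ k−2. -/
/-- The contribution of a vertex `w` to the sum `∑_j (n_{1,j}/2 + ∑_{i=2}^{k-1} n_{i,j})`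
for the cycle `f`:
`c(w) = (1/2)·|{j : w ∈ A_1(D_j)}| + ∑_{i=2}^{k-1} |{j : w ∈ A_i(D_j)}|`. -/
noncomputable def contrib {V : Type*} (G : SimpleGraph V) (k : ℕ) (f : ZMod k → V)
    (w : V) : ℝ :=
  (1 / 2) * (Nat.card ↥{j : ZMod k | w ∈ Aset G k (goodRot f j) 1} : ℝ) +
    ∑ i ∈ Finset.Icc 2 (k - 1),
      (Nat.card ↥{j : ZMod k | w ∈ Aset G k (goodRot f j) i} : ℝ)


/-!
Every entry of every `D_j` lies on the cycle, and membership of `w` in `A_1(D_j)`,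
`A_3(D_j)` or `A_i(D_j)` for `i ≥ 4` forces `w` to be adjacent to such an entry. So only
`A_2` contributes, and `w ∈ A_2(D_j)` means `d(v_{j+1}, w) = 2`. This cannot happen for two
consecutive `j`: the two paths of length two to `w` together with the cycle edge
`v_{j+1}v_{j+2}` form a closed walk of length five, which contains an odd cycle of length at
most five. Hence `w` lies in `A_2(D_j)` for at most `k/2 ≤ k - 2` indices `j`.
-/

namespace SimpleGraph

variable {V : Type*} {G : SimpleGraph V}

theorem commonNeighbors_nonempty_of_dist_eq_two {u w : V} (h : G.dist u w = 2) :
    (G.commonNeighbors u w).Nonempty := by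
  rw [dist, ENat.toNat_eq_iff two_ne_zero] at h
  exact (edist_eq_two_iff.mp h).2.2

end SimpleGraph

theorem ZMod.two_mul_ncard_le_of_add_one_notMem {k : ℕ} [NeZero k] (S : Set (ZMod k))
    (hS : ∀ j ∈ S, j + 1 ∉ S) : 2 * S.ncard ≤ k := by
  have hshift : (· + 1) '' S ⊆ Sᶜ := by
    rintro _ ⟨j, hj, rfl⟩
    exact hS j hj
  have hle := Set.ncard_le_ncard hshift
  rw [Set.ncard_image_of_injective S (add_left_injective 1)] at hle
  have htotal := Set.ncard_add_ncard_compl S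
  rw [Nat.card_zmod] at htotal
  omega

namespace NoShortOddCycle

variable {V : Type*} {G : SimpleGraph V} {k : ℕ}

theorem false_of_triangle (hG : NoShortOddCycle G k) (hk : 3 < k) {a b c : V}
    (hab : G.Adj a b) (hbc : G.Adj b c) (hca : G.Adj c a) : False := by
  refine hG 3 (by decide) le_rfl hk ![a, b, c] ⟨?_, ?_⟩
  · have := hab.ne
    have := hbc.ne
    have := hca.ne
    intro x y hxy
    fin_cases x <;> fin_cases y <;> simp_all <;> rfl
  · intro i
    fin_cases i
    exacts [hab, hbc, hca]

theorem false_of_closed_walk_five (hG : NoShortOddCycle G k) (hk : 5 < k)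
    {v₀ v₁ v₂ v₃ v₄ : V} (h₀₁ : G.Adj v₀ v₁) (h₁₂ : G.Adj v₁ v₂) (h₂₃ : G.Adj v₂ v₃)
    (h₃₄ : G.Adj v₃ v₄) (h₄₀ : G.Adj v₄ v₀) : False := by
  have hk3 : 3 < k := by omega
  -- a repeated vertex cuts the closed walk into a triangle and a single edge
  by_cases h₀₂ : v₀ = v₂
  · subst h₀₂; exact hG.false_of_triangle hk3 h₂₃ h₃₄ h₄₀
  by_cases h₀₃ : v₀ = v₃
  · subst h₀₃; exact hG.false_of_triangle hk3 h₀₁ h₁₂ h₂₃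
  by_cases h₁₃ : v₁ = v₃
  · subst h₁₃; exact hG.false_of_triangle hk3 h₃₄ h₄₀ h₀₁
  by_cases h₁₄ : v₁ = v₄
  · subst h₁₄; exact hG.false_of_triangle hk3 h₁₂ h₂₃ h₃₄
  by_cases h₂₄ : v₂ = v₄
  · subst h₂₄; exact hG.false_of_triangle hk3 h₄₀ h₀₁ h₁₂
  refine hG 5 (by decide) (by omega) hk ![v₀, v₁, v₂, v₃, v₄] ⟨?_, ?_⟩
  · have := h₀₁.ne
    have := h₁₂.ne
    have := h₂₃.ne
    have := h₃₄.ne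
    have := h₄₀.ne
    intro x y hxy
    fin_cases x <;> fin_cases y <;> simp_all <;> rfl
  · intro i
    fin_cases i
    exacts [h₀₁, h₁₂, h₂₃, h₃₄, h₄₀]

theorem dist_ne_two_of_adj (hG : NoShortOddCycle G k) (hk : 5 < k) {u v w : V}
    (huv : G.Adj u v) (hu : G.dist u w = 2) : G.dist v w ≠ 2 := by
  intro hv
  obtain ⟨x, hux, hxw⟩ := SimpleGraph.commonNeighbors_nonempty_of_dist_eq_two hu
  obtain ⟨y, hvy, hyw⟩ := SimpleGraph.commonNeighbors_nonempty_of_dist_eq_two hv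
  exact hG.false_of_closed_walk_five hk hux hxw.symm hyw hvy.symm huv.symm

end NoShortOddCycle

section GoodSequences

variable {V : Type*} {k : ℕ}

theorem seqAt_mem_range (z : ZMod k → V) (w : V) {i a : ℕ} (ha : a ≠ i) :
    seqAt z w i a ∈ Set.range z := by
  unfold seqAt
  rw [if_neg ha]
  split_ifs <;> exact ⟨_, rfl⟩

theorem exists_adj_of_mem_Aset {G : SimpleGraph V} {z : ZMod k → V} {w : V} {i : ℕ}
    (hi₀ : i ≠ 0) (hi₂ : i ≠ 2) (hw : w ∈ Aset G k z i) : ∃ m, G.Adj (z m) w := by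
  have last : seqAt z w i i = w := if_pos rfl
  unfold Aset at hw
  split_ifs at hw with h₀ _ _ hlast
  · exact absurd h₀ hi₀
  · exact ⟨0, hw⟩
  · exact ⟨1, hw.1⟩
  · rw [← hlast] at hw
    have hadj := (hw.2 0 i (by omega) (by omega)).mpr (Or.inr (Or.inl ⟨rfl, hlast⟩))
    obtain ⟨m, hm⟩ := seqAt_mem_range z w hi₀.symm
    rw [last] at hadj
    exact ⟨m, hm ▸ hadj⟩
  · have hadj := (hw.2 (i - 1) i (by omega) le_rfl).mpr (Or.inl (by omega))
    obtain ⟨m, hm⟩ := seqAt_mem_range z w (show i - 1 ≠ i by omega)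
    rw [last] at hadj
    exact ⟨m, hm ▸ hadj⟩

theorem goodRot_mem_range (f : ZMod k → V) (j i : ZMod k) :
    goodRot f j i ∈ Set.range f := by
  unfold goodRot goodOfCycle
  split_ifs <;> exact ⟨_, rfl⟩

theorem goodRot_apply_one (f : ZMod k → V) (j : ZMod k) (hk : 3 < k) :
    goodRot f j 1 = f (j + 1) := by
  have hne : ∀ n : ℕ, 1 < n → n < k → (1 : ZMod k) ≠ n := by
    intro n hn hnk h
    rw [← Nat.cast_one, ZMod.natCast_eq_natCast_iff', Nat.mod_eq_of_lt (by omega),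
      Nat.mod_eq_of_lt hnk] at h
    omega
  unfold goodRot goodOfCycle
  rw [if_neg (mod_cast hne 2 (by norm_num) (by omega)),
    if_neg (mod_cast hne 3 (by norm_num) hk)]

end GoodSequences

section Contribution

variable {V : Type*} {k : ℕ} {G : SimpleGraph V} {f : ZMod k → V} {w : V}

theorem setOf_mem_Aset_goodRot_eq_empty (hw : ∀ i : ZMod k, ¬ G.Adj w (f i)) {i : ℕ}
    (hi₀ : i ≠ 0) (hi₂ : i ≠ 2) : {j : ZMod k | w ∈ Aset G k (goodRot f j) i} = ∅ := by
  refine Set.eq_empty_of_forall_notMem fun j hj => ?_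
  obtain ⟨m, hm⟩ := exists_adj_of_mem_Aset hi₀ hi₂ hj
  obtain ⟨n, hn⟩ := goodRot_mem_range f j m
  exact hw n (hn ▸ hm).symm

theorem two_mul_ncard_setOf_mem_Aset_two_le (hk : 5 < k) (hG : NoShortOddCycle G k)
    (hf : IsCycleMap G f) :
    2 * {j : ZMod k | w ∈ Aset G k (goodRot f j) 2}.ncard ≤ k := by
  have : NeZero k := ⟨by omega⟩
  have hdist : ∀ j : ZMod k, w ∈ Aset G k (goodRot f j) 2 → G.dist (f (j + 1)) w = 2 := by
    intro j hj
    rw [← goodRot_apply_one f j (by omega)]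
    exact hj.2
  refine ZMod.two_mul_ncard_le_of_add_one_notMem _ fun j hj hj₁ => ?_
  refine hG.dist_ne_two_of_adj hk (hf.2 (j + 1)) (hdist j hj) ?_
  exact hdist (j + 1) hj₁

end Contribution

theorem contrib_of_no_neighbors_general {V : Type*} (k : ℕ)
    (hk : 7 ≤ k) (G : SimpleGraph V) (hG : NoShortOddCycle G k)
    (f : ZMod k → V) (hf : IsCycleMap G f) (w : V)
    (hw : ∀ i : ZMod k, ¬ G.Adj w (f i)) :
    contrib G k f w ≤ (k : ℝ) - 2 := by
  have hsum : ∑ i ∈ Finset.Icc 2 (k - 1),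
      (Nat.card ↥{j : ZMod k | w ∈ Aset G k (goodRot f j) i} : ℝ) =
        {j : ZMod k | w ∈ Aset G k (goodRot f j) 2}.ncard := by
    rw [Finset.sum_eq_single_of_mem 2 (Finset.mem_Icc.mpr ⟨le_rfl, by omega⟩)]
    · rw [Nat.card_coe_set_eq]
    · intro i hi hi₂
      rw [setOf_mem_Aset_goodRot_eq_empty hw (by simp at hi; omega) hi₂]
      simp
  have hcount : (2 : ℝ) * {j : ZMod k | w ∈ Aset G k (goodRot f j) 2}.ncard ≤ k := by
    exact_mod_cast two_mul_ncard_setOf_mem_Aset_two_le (by omega) hG hf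
  have hk' : (7 : ℝ) ≤ k := by exact_mod_cast hk
  unfold contrib
  rw [setOf_mem_Aset_goodRot_eq_empty hw one_ne_zero (by norm_num), hsum]
  simp only [Nat.card_of_isEmpty, CharP.cast_eq_zero, mul_zero, zero_add]
  linarith

/-- If a vertex `w` has no neighbours on the `k`-cycle `f`, then its contribution is at
most `k - 2`. -/
theorem contrib_of_no_neighbors {V : Type*} [Fintype V] (k : ℕ) (hodd : Odd k)
    (hk : 7 ≤ k) (G : SimpleGraph V) (hG : NoShortOddCycle G k)
    (f : ZMod k → V) (hf : IsCycleMap G f) (w : V)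
    (hw : ∀ i : ZMod k, ¬ G.Adj w (f i)) :
    contrib G k f w ≤ (k : ℝ) - 2 :=
  contrib_of_no_neighbors_general k hk G hG f hf w hw
end
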